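/- arXiv:math/0412130 — 8 statements merged into one kernel-verified Lean document; each statement's English description precedes it below -/
import Mathlib

section
/- Let A ⊆ S be complete subsets of Δ and let S = S₁ ⊔ S₂ be a decomposition of S. If both A ∩ S₁ and A ∩ S₂ are nonempty, then A = (A ∩ S₁) ⊔ (A ∩ S₂) is a decomposition of A (in particular U_A = U_{A∩S₁} ⊕ U_{A∩S₂}, and A ∩ S₁, A ∩ S₂ are complete). -/
/-- `S` is a complete subset relative to the arrangement `Δ`:
`S` equals the intersection of `Δ` with the span of `S`. -/
def IsCompleteSet {V : Type*} [AddCommGroup V] [Module ℝ V] (Δ S : Set V) : Prop :=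
  Δ ∩ (Submodule.span ℝ S : Set V) = S

/-- `(S₁, S₂)` is a decomposition of the set `S`: a partition into two nonempty
parts whose spans form a direct sum decomposition of the span of `S`. -/
def IsDecomposition {V : Type*} [AddCommGroup V] [Module ℝ V] (S S₁ S₂ : Set V) : Prop :=
  S₁.Nonempty ∧ S₂.Nonempty ∧ Disjoint S₁ S₂ ∧ S₁ ∪ S₂ = S ∧
    Submodule.span ℝ S₁ ⊓ Submodule.span ℝ S₂ = ⊥ ∧
    Submodule.span ℝ S₁ ⊔ Submodule.span ℝ S₂ = Submodule.span ℝ S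

/-- A nonempty complete set is irreducible if it admits no decomposition. -/
def IsIrred {V : Type*} [AddCommGroup V] [Module ℝ V] (Δ S : Set V) : Prop :=
  IsCompleteSet Δ S ∧ S.Nonempty ∧ ∀ S₁ S₂ : Set V, ¬ IsDecomposition S S₁ S₂

/-- if `A ⊆ S` are complete subsets of `Δ`, `S = S₁ ⊔ S₂` is a
decomposition of `S`, and both `A ∩ S₁` and `A ∩ S₂` are nonempty, then
`A = (A ∩ S₁) ⊔ (A ∩ S₂)` is a decomposition of `A`; in particular
`A ∩ S₁` and `A ∩ S₂` are complete. -/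
theorem stmt_0 {V : Type*} [AddCommGroup V] [Module ℝ V] [FiniteDimensional ℝ V]
    (Δ : Set V) (hΔfin : Δ.Finite) (hΔspan : Submodule.span ℝ Δ = ⊤)
    (hΔ0 : ∀ v ∈ Δ, v ≠ 0)
    (hΔpair : ∀ v ∈ Δ, ∀ w ∈ Δ, v ≠ w → ∀ c : ℝ, w ≠ c • v)
    (A S S₁ S₂ : Set V) (hAS : A ⊆ S)
    (hA : IsCompleteSet Δ A) (hS : IsCompleteSet Δ S)
    (hdec : IsDecomposition S S₁ S₂)
    (h1 : (A ∩ S₁).Nonempty) (h2 : (A ∩ S₂).Nonempty) :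
    IsDecomposition A (A ∩ S₁) (A ∩ S₂) ∧
      IsCompleteSet Δ (A ∩ S₁) ∧ IsCompleteSet Δ (A ∩ S₂) := by
  obtain ⟨hne1, hne2, hdisj, hunion, hinf, hsup⟩ := hdec
  have hunionA : (A ∩ S₁) ∪ (A ∩ S₂) = A := by
    rw [← Set.inter_union_distrib_left, hunion]
    exact Set.inter_eq_left.mpr hAS
  have hinfA : Submodule.span ℝ (A ∩ S₁) ⊓ Submodule.span ℝ (A ∩ S₂) = ⊥ := by
    rw [← le_bot_iff, ← hinf]
    exact inf_le_inf (Submodule.span_mono Set.inter_subset_right)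
      (Submodule.span_mono Set.inter_subset_right)
  have hAΔ : A ⊆ Δ := by rw [← hA]; exact Set.inter_subset_left
  have hAspan : ∀ v ∈ Δ, ∀ T : Set V, T ⊆ A → v ∈ Submodule.span ℝ T → v ∈ A := by
    intro v hv T hT hvT
    rw [← hA]
    exact ⟨hv, Submodule.span_mono hT hvT⟩
  have comp : ∀ T₁ T₂ : Set V, T₁ ∪ T₂ = S →
      Submodule.span ℝ T₁ ⊓ Submodule.span ℝ T₂ = ⊥ →
      IsCompleteSet Δ (A ∩ T₁) := by
    intro T₁ T₂ hu hbot
    apply Set.Subset.antisymm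
    · rintro v ⟨hvΔ, hvspan⟩
      have hvA : v ∈ A := hAspan v hvΔ _ Set.inter_subset_left hvspan
      have hvT : v ∈ T₁ ∪ T₂ := by rw [hu]; exact hAS hvA
      rcases hvT with h | h
      · exact ⟨hvA, h⟩
      · exfalso
        have : v ∈ Submodule.span ℝ T₁ ⊓ Submodule.span ℝ T₂ :=
          ⟨Submodule.span_mono Set.inter_subset_right hvspan, Submodule.subset_span h⟩
        rw [hbot] at this
        exact hΔ0 v hvΔ this
    · intro v hv
      exact ⟨hAΔ hv.1, Submodule.subset_span hv⟩
  refine ⟨⟨h1, h2, hdisj.mono Set.inter_subset_right Set.inter_subset_right,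
    hunionA, hinfA, ?_⟩, comp S₁ S₂ hunion hinf, comp S₂ S₁ ?_ ?_⟩
  · rw [← Submodule.span_union, hunionA]
  · rw [Set.union_comm]; exact hunion
  · rw [inf_comm]; exact hinf
end

section
/- Every nested family 𝕄 of irreducible subsets of Δ is the set of irreducible components of the elements of a flag of complete sets: there exists a chain A₁ ⊇ A₂ ⊇ ⋯ ⊇ A_k of complete subsets of Δ such that 𝕄 is exactly the set of all irreducible components of the sets A₁, …, A_k. -/
/-- `𝒞` is the set of irreducible components of `S`: a finite family of pairwise
disjoint irreducible sets whose (disjoint) union is `S` and whose spans form a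
direct sum decomposition of the span of `S`. -/
def IsIrredComponents {V : Type*} [AddCommGroup V] [Module ℝ V]
    (Δ S : Set V) (𝒞 : Set (Set V)) : Prop :=
  𝒞.Finite ∧ (∀ T ∈ 𝒞, IsIrred Δ T) ∧ 𝒞.PairwiseDisjoint id ∧ ⋃₀ 𝒞 = S ∧
    iSupIndep (fun T : 𝒞 => Submodule.span ℝ (T : Set V)) ∧
    (⨆ T ∈ 𝒞, Submodule.span ℝ T) = Submodule.span ℝ S


/-- A family `𝕄` of irreducible subsets of `Δ` is nested if for every nonempty
subfamily in which no member is contained in another, the union of the subfamily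
is complete and its members are the irreducible components of the union. -/
def IsNestedFam {V : Type*} [AddCommGroup V] [Module ℝ V] (Δ : Set V) (𝕄 : Set (Set V)) : Prop :=
  (∀ T ∈ 𝕄, IsIrred Δ T) ∧
    ∀ 𝒯 ⊆ 𝕄, 𝒯.Nonempty → (∀ T₁ ∈ 𝒯, ∀ T₂ ∈ 𝒯, T₁ ⊆ T₂ → T₁ = T₂) →
      IsCompleteSet Δ (⋃₀ 𝒯) ∧ IsIrredComponents Δ (⋃₀ 𝒯) 𝒯

def IsLaminar {α : Type*} (𝕄 : Set (Set α)) : Prop :=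
  ∀ S ∈ 𝕄, ∀ T ∈ 𝕄, (S ∩ T).Nonempty → S ⊆ T ∨ T ⊆ S

namespace IsLaminar

variable {α : Type*} {𝕄 : Set (Set α)} {S T : Set α} {n : ℕ}

noncomputable def depth (𝕄 : Set (Set α)) (T : Set α) : ℕ := {S ∈ 𝕄 | T ⊂ S}.ncard

def layer (𝕄 : Set (Set α)) (n : ℕ) : Set (Set α) := {T ∈ 𝕄 | depth 𝕄 T = n}

theorem depth_lt_depth (h𝕄 : 𝕄.Finite) (hS : S ∈ 𝕄) (hTS : T ⊂ S) :
    depth 𝕄 S < depth 𝕄 T := by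
  refine Set.ncard_lt_ncard ⟨fun R hR => ⟨hR.1, hTS.trans hR.2⟩, fun h => ?_⟩
    (h𝕄.subset fun _ hR => hR.1)
  exact (h ⟨hS, hTS⟩).2.ne rfl

theorem isAntichain_layer (h𝕄 : 𝕄.Finite) (n : ℕ) : IsAntichain (· ⊆ ·) (layer 𝕄 n) := by
  intro T hT S hS hne hTS
  have := depth_lt_depth h𝕄 hS.1 (hTS.ssubset_of_ne hne)
  rw [hS.2, hT.2] at this
  exact this.false

theorem exists_ssuperset_depth_eq (hlam : IsLaminar 𝕄) (h𝕄 : 𝕄.Finite) (hT : T.Nonempty)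
    (hd : depth 𝕄 T = n + 1) : ∃ S ∈ 𝕄, T ⊂ S ∧ depth 𝕄 S = n := by
  set U := {S ∈ 𝕄 | T ⊂ S}
  have hU : U.Finite := h𝕄.subset fun _ hS => hS.1
  obtain ⟨S, hSU, hmin⟩ :=
    hU.exists_minimalFor id U (Set.nonempty_of_ncard_ne_zero (hd.trans_ne n.succ_ne_zero))
  -- by laminarity the strict supersets of `T` in `𝕄` form a chain, whose least element is `S`
  have hsucc : {R ∈ 𝕄 | S ⊂ R} = U \ {S} := by
    ext R
    refine ⟨fun hR => ⟨⟨hR.1, hSU.2.trans hR.2⟩, hR.2.ne'⟩, fun ⟨hRU, hRS⟩ => ⟨hRU.1, ?_⟩⟩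
    obtain ⟨x, hx⟩ := hT
    rcases hlam S hSU.1 R hRU.1 ⟨x, hSU.2.1 hx, hRU.2.1 hx⟩ with h | h
    · exact h.ssubset_of_ne (Ne.symm hRS)
    · exact absurd ((hmin hRU h).antisymm h) (Ne.symm hRS)
  refine ⟨S, hSU.1, hSU.2, ?_⟩
  rw [depth, hsucc, Set.ncard_sdiff_singleton_of_mem hSU, show U.ncard = n + 1 from hd,
    Nat.add_sub_cancel]

theorem sUnion_layer_succ_subset (hlam : IsLaminar 𝕄) (h𝕄 : 𝕄.Finite) (n : ℕ) :
    ⋃₀ layer 𝕄 (n + 1) ⊆ ⋃₀ layer 𝕄 n := by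
  rintro x ⟨T, ⟨hT, hd⟩, hxT⟩
  obtain ⟨S, hS, hTS, hdS⟩ := hlam.exists_ssuperset_depth_eq h𝕄 ⟨x, hxT⟩ hd
  exact ⟨S, ⟨hS, hdS⟩, hTS.1 hxT⟩

theorem antitone_sUnion_layer (hlam : IsLaminar 𝕄) (h𝕄 : 𝕄.Finite) :
    Antitone fun n => ⋃₀ layer 𝕄 n :=
  antitone_nat_of_succ_le (hlam.sUnion_layer_succ_subset h𝕄)

theorem layer_nonempty_of_le_depth (hlam : IsLaminar 𝕄) (h𝕄 : 𝕄.Finite)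
    (hne : ∀ T ∈ 𝕄, T.Nonempty) (hT : T ∈ 𝕄) (hn : n ≤ depth 𝕄 T) : (layer 𝕄 n).Nonempty := by
  obtain ⟨d, hd⟩ := Nat.exists_eq_add_of_le hn
  clear hn
  induction d generalizing T with
  | zero => exact ⟨T, hT, hd⟩
  | succ d ih =>
    obtain ⟨S, hS, -, hdS⟩ := hlam.exists_ssuperset_depth_eq h𝕄 (hne T hT) hd
    exact ih hS hdS

theorem exists_layer_nonempty_iff (hlam : IsLaminar 𝕄) (h𝕄 : 𝕄.Finite)
    (hne : ∀ T ∈ 𝕄, T.Nonempty) : ∃ k, ∀ n, (layer 𝕄 n).Nonempty ↔ n < k := by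
  refine ⟨h𝕄.toFinset.sup (depth 𝕄 · + 1), fun n => ?_⟩
  simp only [Finset.lt_sup_iff, Set.Finite.mem_toFinset, Nat.lt_succ_iff]
  exact ⟨fun ⟨T, hT⟩ => ⟨T, hT.1, hT.2.ge⟩,
    fun ⟨T, hT, hn⟩ => hlam.layer_nonempty_of_le_depth h𝕄 hne hT hn⟩

end IsLaminar

section NestedFamily

variable {V : Type*} [AddCommGroup V] [Module ℝ V] {Δ S : Set V} {𝕄 : Set (Set V)}

theorem IsCompleteSet.subset (hS : IsCompleteSet Δ S) : S ⊆ Δ :=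
  hS ▸ Set.inter_subset_left

theorem IsNestedFam.finite (h𝕄 : IsNestedFam Δ 𝕄) (hΔ : Δ.Finite) : 𝕄.Finite :=
  hΔ.finite_subsets.subset fun T hT => (h𝕄.1 T hT).1.subset

theorem IsNestedFam.isLaminar (h𝕄 : IsNestedFam Δ 𝕄) : IsLaminar 𝕄 := by
  intro S hS T hT hST
  by_contra! hinc
  have hpair : IsAntichain (· ⊆ ·) ({S, T} : Set (Set V)) :=
    IsAntichain.insert (by simp) (by simp [hinc.2]) (by simp [hinc.1])
  have hcomp := (h𝕄.2 {S, T} (Set.pair_subset hS hT) (Set.insert_nonempty _ _)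
    fun _ h₁ _ h₂ => hpair.eq h₁ h₂).2
  have hdisj : Disjoint S T := hcomp.2.2.1 (by simp) (by simp) fun h => hinc.1 h.le
  exact hST.ne_empty (Set.disjoint_iff_inter_eq_empty.1 hdisj)

end NestedFamily

theorem stmt_3_general {V : Type*} [AddCommGroup V] [Module ℝ V]
    (Δ : Set V) (hΔfin : Δ.Finite)
    (𝕄 : Set (Set V)) (h𝕄 : IsNestedFam Δ 𝕄) :
    ∃ (k : ℕ) (A : Fin k → Set V) (𝒞 : Fin k → Set (Set V)),
      (∀ i, IsCompleteSet Δ (A i)) ∧ (∀ i, (A i).Nonempty) ∧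
      (∀ i j : Fin k, i ≤ j → A j ⊆ A i) ∧
      (∀ i, IsIrredComponents Δ (A i) (𝒞 i)) ∧
      𝕄 = ⋃ i, 𝒞 i := by
  have hfin := h𝕄.finite hΔfin
  have hlam := h𝕄.isLaminar
  have hne : ∀ T ∈ 𝕄, T.Nonempty := fun T hT => (h𝕄.1 T hT).2.1
  obtain ⟨k, hk⟩ := hlam.exists_layer_nonempty_iff hfin hne
  have hnest (i : Fin k) := h𝕄.2 (IsLaminar.layer 𝕄 i) (fun _ hT => hT.1) ((hk i).2 i.2)
    fun _ h₁ _ h₂ => (IsLaminar.isAntichain_layer hfin i).eq h₁ h₂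
  refine ⟨k, fun i => ⋃₀ IsLaminar.layer 𝕄 i, fun i => IsLaminar.layer 𝕄 i,
    fun i => (hnest i).1, fun i => ?_, fun i j hij => hlam.antitone_sUnion_layer hfin hij,
    fun i => (hnest i).2, ?_⟩
  · obtain ⟨T, hT⟩ := (hk i).2 i.2
    exact (hne T hT.1).mono (Set.subset_sUnion_of_mem hT)
  · ext T
    refine ⟨fun hT => Set.mem_iUnion.2 ⟨⟨IsLaminar.depth 𝕄 T, (hk _).1 ⟨T, hT, rfl⟩⟩, hT, rfl⟩, ?_⟩
    rintro ⟨-, ⟨i, rfl⟩, hT⟩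
    exact hT.1

/-- every nested family `𝕄` of irreducible subsets of `Δ` is the set
of irreducible components of the members of a flag `A₁ ⊇ A₂ ⊇ ⋯ ⊇ A_k` of
(nonempty) complete subsets of `Δ`. -/
theorem stmt_3 {V : Type*} [AddCommGroup V] [Module ℝ V] [FiniteDimensional ℝ V]
    (Δ : Set V) (hΔfin : Δ.Finite) (hΔspan : Submodule.span ℝ Δ = ⊤)
    (hΔ0 : ∀ v ∈ Δ, v ≠ 0)
    (hΔpair : ∀ v ∈ Δ, ∀ w ∈ Δ, v ≠ w → ∀ c : ℝ, w ≠ c • v)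
    (𝕄 : Set (Set V)) (h𝕄 : IsNestedFam Δ 𝕄) :
    ∃ (k : ℕ) (A : Fin k → Set V) (𝒞 : Fin k → Set (Set V)),
      (∀ i, IsCompleteSet Δ (A i)) ∧ (∀ i, (A i).Nonempty) ∧
      (∀ i j : Fin k, i ≤ j → A j ⊆ A i) ∧
      (∀ i, IsIrredComponents Δ (A i) (𝒞 i)) ∧
      𝕄 = ⋃ i, 𝒞 i :=
  stmt_3_general Δ hΔfin 𝕄 h𝕄
end

section
/- Every maximal nested family of irreducible subsets of Δ (maximal under inclusion among nested families) has exactly r elements, where r = dim V. -/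
section Aux
variable {V : Type*} [AddCommGroup V] [Module ℝ V]

open Submodule Set

lemma span_sUnion' (𝒮 : Set (Set V)) : span ℝ (⋃₀ 𝒮) = ⨆ S ∈ 𝒮, span ℝ S := by
  rw [Set.sUnion_eq_iUnion, Submodule.span_iUnion, iSup_subtype]

lemma compl_subset {Δ S : Set V} (h : IsCompleteSet Δ S) : S ⊆ Δ := by
  rw [← h]; exact Set.inter_subset_left

lemma compl_span {Δ S : Set V} (h : IsCompleteSet Δ S) :
    Δ ∩ (span ℝ S : Set V) = S := h

lemma compl_empty {Δ : Set V} (hΔ0 : ∀ v ∈ Δ, v ≠ 0) : IsCompleteSet Δ (∅ : Set V) := by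
  unfold IsCompleteSet
  rw [Submodule.span_empty]
  ext x
  simp only [Set.mem_inter_iff, SetLike.mem_coe, Submodule.mem_bot, Set.mem_empty_iff_false,
    iff_false, not_and]
  exact fun hx h0 => hΔ0 x hx h0

/-- the completion of a subset of Δ has the same span and is complete -/
lemma completion_span {Δ S : Set V} (hS : S ⊆ Δ) :
    span ℝ (Δ ∩ (span ℝ S : Set V) : Set V) = span ℝ S := by
  apply le_antisymm
  · exact Submodule.span_le.2 fun x hx => hx.2
  · exact Submodule.span_mono (fun x hx => ⟨hS hx, Submodule.subset_span hx⟩)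

lemma completion_complete {Δ S : Set V} (hS : S ⊆ Δ) :
    IsCompleteSet Δ (Δ ∩ (span ℝ S : Set V)) := by
  unfold IsCompleteSet
  rw [completion_span hS]

/-- lattice lemma: a,b ≤ U, a ⊓ b = ⊥, c ⊓ U = ⊥ ⇒ a ⊓ (b ⊔ c) = ⊥ -/
lemma latt {a b c U : Submodule ℝ V} (ha : a ≤ U) (hb : b ≤ U)
    (hab : Disjoint a b) (hcU : Disjoint c U) : Disjoint a (b ⊔ c) := by
  rw [Submodule.disjoint_def]
  intro x hxa hx
  rcases Submodule.mem_sup.1 hx with ⟨y, hy, z, hz, rfl⟩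
  have hzU : z ∈ U := by
    have : z = (y + z) - y := by abel
    rw [this]; exact U.sub_mem (ha hxa) (hb hy)
  have hz0 : z = 0 := (Submodule.disjoint_def.1 hcU) z hz hzU
  subst hz0
  rw [add_zero] at *
  exact (Submodule.disjoint_def.1 hab) y hxa hy

end Aux

section Aux2
variable {V : Type*} [AddCommGroup V] [Module ℝ V]
open Submodule Set

lemma indep_iff (𝒞 : Set (Set V)) :
    iSupIndep (fun T : 𝒞 => Submodule.span ℝ (T : Set V)) ↔
      ∀ T ∈ 𝒞, Disjoint (span ℝ T) (span ℝ (⋃₀ (𝒞 \ {T}))) := by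
  rw [iSupIndep_def]
  constructor
  · intro h T hT
    refine (h ⟨T, hT⟩).mono_right ?_
    rw [span_sUnion']
    refine iSup₂_le fun S hS => ?_
    refine le_iSup_of_le ⟨S, hS.1⟩ (le_iSup_of_le ?_ le_rfl)
    intro hEq
    exact hS.2 (by simpa using congrArg Subtype.val hEq)
  · intro h i
    refine (h i i.2).mono_right ?_
    rw [span_sUnion']
    refine iSup_le fun j => iSup_le fun hji => ?_
    refine le_iSup_of_le (j : Set V) (le_iSup_of_le ⟨j.2, ?_⟩ le_rfl)
    simpa [Subtype.ext_iff] using hji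

lemma comp_sup {S : Set V} {𝒞 : Set (Set V)} (h : ⋃₀ 𝒞 = S) :
    (⨆ T ∈ 𝒞, Submodule.span ℝ T) = Submodule.span ℝ S := by
  rw [← span_sUnion', h]

lemma single_comp {Δ T : Set V} (h : IsIrred Δ T) : IsIrredComponents Δ T {T} := by
  refine ⟨Set.finite_singleton T, by simpa using h, Set.pairwiseDisjoint_singleton T id,
    Set.sUnion_singleton T, ?_, comp_sup (Set.sUnion_singleton T)⟩
  rw [indep_iff]
  intro S hS
  simp only [Set.mem_singleton_iff] at hS
  subst hS
  simp [Submodule.span_empty]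

lemma comp_union_subset {Δ S : Set V} {𝒞 : Set (Set V)} (h : IsIrredComponents Δ S 𝒞) :
    S ⊆ Δ := by
  rw [← h.2.2.2.1]
  rintro x ⟨T, hT, hx⟩
  exact compl_subset (h.2.1 T hT).1 hx

lemma merge {Δ E₁ E₂ : Set V} {𝒞₁ 𝒞₂ : Set (Set V)} (hΔ0 : ∀ v ∈ Δ, v ≠ 0)
    (h1 : IsIrredComponents Δ E₁ 𝒞₁) (h2 : IsIrredComponents Δ E₂ 𝒞₂)
    (hd : Disjoint (span ℝ E₁) (span ℝ E₂)) :
    IsIrredComponents Δ (E₁ ∪ E₂) (𝒞₁ ∪ 𝒞₂) := by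
  have hsub1 : ∀ T ∈ 𝒞₁, T ⊆ E₁ := fun T hT => h1.2.2.2.1 ▸ Set.subset_sUnion_of_mem hT
  have hsub2 : ∀ T ∈ 𝒞₂, T ⊆ E₂ := fun T hT => h2.2.2.2.1 ▸ Set.subset_sUnion_of_mem hT
  have hdisjE : Disjoint E₁ E₂ := by
    rw [Set.disjoint_left]
    intro x hx1 hx2
    have h0 : x = 0 := by
      have := Submodule.disjoint_def.1 hd x (Submodule.subset_span hx1) (Submodule.subset_span hx2)
      exact this
    exact hΔ0 x (comp_union_subset h1 hx1) h0
  have hspan1 : ∀ 𝒢 ⊆ 𝒞₁, span ℝ (⋃₀ 𝒢) ≤ span ℝ E₁ :=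
    fun 𝒢 h𝒢 => Submodule.span_mono (Set.sUnion_subset fun T hT => hsub1 T (h𝒢 hT))
  have hspan2 : ∀ 𝒢 ⊆ 𝒞₂, span ℝ (⋃₀ 𝒢) ≤ span ℝ E₂ :=
    fun 𝒢 h𝒢 => Submodule.span_mono (Set.sUnion_subset fun T hT => hsub2 T (h𝒢 hT))
  refine ⟨h1.1.union h2.1, ?_, ?_, ?_, ?_, ?_⟩
  · rintro T (hT | hT)
    exacts [h1.2.1 T hT, h2.2.1 T hT]
  · rintro T₁ (hT₁ | hT₁) T₂ (hT₂ | hT₂) hne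
    · exact h1.2.2.1 hT₁ hT₂ hne
    · exact Set.disjoint_of_subset (hsub1 T₁ hT₁) (hsub2 T₂ hT₂) hdisjE
    · exact Set.disjoint_of_subset (hsub2 T₁ hT₁) (hsub1 T₂ hT₂) hdisjE.symm
    · exact h2.2.2.1 hT₁ hT₂ hne
  · rw [Set.sUnion_union, h1.2.2.2.1, h2.2.2.2.1]
  · rw [indep_iff]
    rintro T (hT | hT)
    · have key : ⋃₀ ((𝒞₁ ∪ 𝒞₂) \ {T}) ⊆ (⋃₀ (𝒞₁ \ {T})) ∪ E₂ := by
        rintro x ⟨S, ⟨(hS | hS), hSne⟩, hx⟩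
        · exact Or.inl ⟨S, ⟨hS, hSne⟩, hx⟩
        · exact Or.inr (hsub2 S hS hx)
      refine Disjoint.mono_right (le_trans (Submodule.span_mono key) ?_)
        (latt (Submodule.span_mono (hsub1 T hT)) (hspan1 _ Set.diff_subset)
          ((indep_iff 𝒞₁).1 h1.2.2.2.2.1 T hT) hd.symm)
      rw [Submodule.span_union]
    · have key : ⋃₀ ((𝒞₁ ∪ 𝒞₂) \ {T}) ⊆ (⋃₀ (𝒞₂ \ {T})) ∪ E₁ := by
        rintro x ⟨S, ⟨(hS | hS), hSne⟩, hx⟩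
        · exact Or.inr (hsub1 S hS hx)
        · exact Or.inl ⟨S, ⟨hS, hSne⟩, hx⟩
      refine Disjoint.mono_right (le_trans (Submodule.span_mono key) ?_)
        (latt (Submodule.span_mono (hsub2 T hT)) (hspan2 _ Set.diff_subset)
          ((indep_iff 𝒞₂).1 h2.2.2.2.2.1 T hT) hd)
      rw [Submodule.span_union]
  · exact comp_sup (by rw [Set.sUnion_union, h1.2.2.2.1, h2.2.2.2.1])

end Aux2

section Aux3
variable {V : Type*} [AddCommGroup V] [Module ℝ V]
open Submodule Set

lemma piece_complete {Δ S S₁ S₂ : Set V} (hΔ0 : ∀ v ∈ Δ, v ≠ 0)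
    (hS : IsCompleteSet Δ S) (hdec : IsDecomposition S S₁ S₂) :
    IsCompleteSet Δ S₁ := by
  obtain ⟨h1, h2, hdisj, huni, hinf, hsup⟩ := hdec
  have hsub : S₁ ⊆ S := huni ▸ Set.subset_union_left
  apply Set.Subset.antisymm
  · rintro x ⟨hxΔ, hxsp⟩
    have hxS : x ∈ S := by
      rw [← hS]
      exact ⟨hxΔ, SetLike.le_def.1 (Submodule.span_mono hsub) hxsp⟩
    rw [← huni] at hxS
    rcases hxS with hx | hx
    · exact hx
    · exfalso
      apply hΔ0 x hxΔ
      have : x ∈ Submodule.span ℝ S₁ ⊓ Submodule.span ℝ S₂ :=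
        ⟨hxsp, Submodule.subset_span hx⟩
      rw [hinf] at this
      exact this
  · exact fun x hx => ⟨compl_subset hS (hsub hx), Submodule.subset_span hx⟩

lemma subset_comp {Δ B T : Set V} {𝒞 : Set (Set V)}
    (h : IsIrredComponents Δ B 𝒞) (hT : IsIrred Δ T) (hTB : T ⊆ B) :
    ∃ C ∈ 𝒞, T ⊆ C := by
  obtain ⟨t, ht⟩ := hT.2.1
  have htB : t ∈ ⋃₀ 𝒞 := h.2.2.2.1.symm ▸ hTB ht
  obtain ⟨C, hC, htC⟩ := htB
  refine ⟨C, hC, ?_⟩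
  by_contra hnsub
  obtain ⟨u, huT, huC⟩ := Set.not_subset.1 hnsub
  apply hT.2.2 (T ∩ C) (T \ C)
  have hrest : T \ C ⊆ ⋃₀ (𝒞 \ {C}) := by
    intro x hx
    have : x ∈ ⋃₀ 𝒞 := h.2.2.2.1.symm ▸ hTB hx.1
    obtain ⟨C', hC', hxC'⟩ := this
    exact ⟨C', ⟨hC', fun hEq => hx.2 (hEq ▸ hxC')⟩, hxC'⟩
  refine ⟨⟨t, ht, htC⟩, ⟨u, huT, huC⟩, (Set.disjoint_sdiff_left).symm.mono_left Set.inter_subset_right,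
    Set.inter_union_diff T C, ?_, ?_⟩
  · rw [← le_bot_iff]
    have hd := (indep_iff 𝒞).1 h.2.2.2.2.1 C hC
    calc span ℝ (T ∩ C) ⊓ span ℝ (T \ C)
        ≤ span ℝ C ⊓ span ℝ (⋃₀ (𝒞 \ {C})) :=
          inf_le_inf (Submodule.span_mono Set.inter_subset_right) (Submodule.span_mono hrest)
      _ = ⊥ := disjoint_iff.1 hd
  · rw [← Submodule.span_union, Set.inter_union_diff]

lemma exists_comps {Δ : Set V} (hΔfin : Δ.Finite) (hΔ0 : ∀ v ∈ Δ, v ≠ 0) :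
    ∀ S : Set V, IsCompleteSet Δ S → S.Nonempty → ∃ 𝒞, IsIrredComponents Δ S 𝒞 := by
  suffices h : ∀ (n : ℕ) (S : Set V), S.ncard = n → IsCompleteSet Δ S → S.Nonempty →
      ∃ 𝒞, IsIrredComponents Δ S 𝒞 from fun S => h S.ncard S rfl
  intro n
  induction n using Nat.strong_induction_on with
  | _ n ih =>
  intro S hn hScomp hSne
  have hSΔ : S ⊆ Δ := compl_subset hScomp
  have hSfin : S.Finite := hΔfin.subset hSΔ
  by_cases hirr : IsIrred Δ S
  · exact ⟨{S}, single_comp hirr⟩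
  · have : ∃ S₁ S₂ : Set V, IsDecomposition S S₁ S₂ := by
      by_contra hno
      push_neg at hno
      exact hirr ⟨hScomp, hSne, hno⟩
    obtain ⟨S₁, S₂, hdec⟩ := this
    have hdec' : IsDecomposition S S₂ S₁ :=
      ⟨hdec.2.1, hdec.1, hdec.2.2.1.symm, Set.union_comm S₂ S₁ ▸ hdec.2.2.2.1,
        inf_comm (Submodule.span ℝ S₁) (Submodule.span ℝ S₂) ▸ hdec.2.2.2.2.1,
        sup_comm (Submodule.span ℝ S₁) (Submodule.span ℝ S₂) ▸ hdec.2.2.2.2.2⟩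
    have hc1 : IsCompleteSet Δ S₁ := piece_complete hΔ0 hScomp hdec
    have hc2 : IsCompleteSet Δ S₂ := piece_complete hΔ0 hScomp hdec'
    have hsub1 : S₁ ⊆ S := hdec.2.2.2.1 ▸ Set.subset_union_left
    have hsub2 : S₂ ⊆ S := hdec.2.2.2.1 ▸ Set.subset_union_right
    have hlt1 : S₁.ncard < n := by
      rw [← hn]
      refine Set.ncard_lt_ncard ⟨hsub1, fun hc => ?_⟩ hSfin
      obtain ⟨y, hy⟩ := hdec.2.1
      exact Set.disjoint_left.1 hdec.2.2.1 (hc (hsub2 hy)) hy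
    have hlt2 : S₂.ncard < n := by
      rw [← hn]
      refine Set.ncard_lt_ncard ⟨hsub2, fun hc => ?_⟩ hSfin
      obtain ⟨y, hy⟩ := hdec.1
      exact Set.disjoint_left.1 hdec.2.2.1 hy (hc (hsub1 hy))
    obtain ⟨𝒞₁, h𝒞₁⟩ := ih _ hlt1 S₁ rfl hc1 hdec.1
    obtain ⟨𝒞₂, h𝒞₂⟩ := ih _ hlt2 S₂ rfl hc2 hdec.2.1
    refine ⟨𝒞₁ ∪ 𝒞₂, ?_⟩
    have := merge hΔ0 h𝒞₁ h𝒞₂ (disjoint_iff.2 hdec.2.2.2.2.1)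
    rwa [hdec.2.2.2.1] at this

end Aux3

section Aux4
variable {V : Type*} [AddCommGroup V] [Module ℝ V]
open Submodule Set

def maxMems (𝒢 : Set (Set V)) : Set (Set V) :=
  {M ∈ 𝒢 | ∀ M' ∈ 𝒢, M ⊆ M' → M = M'}

lemma maxMems_subset (𝒢 : Set (Set V)) : maxMems 𝒢 ⊆ 𝒢 := fun _ h => h.1

lemma maxMems_antichain (𝒢 : Set (Set V)) :
    ∀ T₁ ∈ maxMems 𝒢, ∀ T₂ ∈ maxMems 𝒢, T₁ ⊆ T₂ → T₁ = T₂ :=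
  fun _ h₁ T₂ h₂ hsub => h₁.2 T₂ h₂.1 hsub

lemma exists_le_max {𝒢 : Set (Set V)} (hfin : 𝒢.Finite) {S : Set V} (hS : S ∈ 𝒢) :
    ∃ M ∈ maxMems 𝒢, S ⊆ M := by
  obtain ⟨M, hSM, hM⟩ := hfin.exists_le_maximal hS
  exact ⟨M, ⟨hM.1, fun M' hM' hsub => le_antisymm hsub (hM.2 hM' hsub)⟩, hSM⟩

lemma sUnion_maxMems {𝒢 : Set (Set V)} (hfin : 𝒢.Finite) : ⋃₀ maxMems 𝒢 = ⋃₀ 𝒢 := by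
  apply Set.Subset.antisymm (Set.sUnion_subset_sUnion (maxMems_subset 𝒢))
  rintro x ⟨S, hS, hx⟩
  obtain ⟨M, hM, hSM⟩ := exists_le_max hfin hS
  exact ⟨M, hM, hSM hx⟩

variable {Δ : Set V} {𝕄 : Set (Set V)}

lemma nested_mono (h : IsNestedFam Δ 𝕄) {𝕄' : Set (Set V)} (hsub : 𝕄' ⊆ 𝕄) :
    IsNestedFam Δ 𝕄' :=
  ⟨fun T hT => h.1 T (hsub hT), fun 𝒯 h𝒯 => h.2 𝒯 (h𝒯.trans hsub)⟩

lemma nested_mem_nonempty (h : IsNestedFam Δ 𝕄) {T : Set V} (hT : T ∈ 𝕄) : T.Nonempty :=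
  (h.1 T hT).2.1

lemma nested_mem_subset (h : IsNestedFam Δ 𝕄) {T : Set V} (hT : T ∈ 𝕄) : T ⊆ Δ :=
  compl_subset (h.1 T hT).1

lemma nested_laminar (h : IsNestedFam Δ 𝕄) {S T : Set V} (hS : S ∈ 𝕄) (hT : T ∈ 𝕄) :
    S ⊆ T ∨ T ⊆ S ∨ Disjoint S T := by
  by_cases h1 : S ⊆ T
  · exact Or.inl h1
  by_cases h2 : T ⊆ S
  · exact Or.inr (Or.inl h2)
  have hne : S ≠ T := fun hEq => h1 (hEq ▸ Set.Subset.rfl)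
  have hanti : ∀ T₁ ∈ ({S, T} : Set (Set V)), ∀ T₂ ∈ ({S, T} : Set (Set V)), T₁ ⊆ T₂ → T₁ = T₂ := by
    rintro T₁ (rfl | rfl) T₂ (rfl | rfl) hsub
    · rfl
    · exact absurd hsub h1
    · exact absurd hsub h2
    · rfl
  have := (h.2 {S, T} (by rintro X (rfl | rfl); exacts [hS, hT]) ⟨S, Or.inl rfl⟩ hanti).2
  exact Or.inr (Or.inr (this.2.2.1 (Or.inl rfl) (Or.inr rfl) hne))

lemma nested_union_complete (hΔ0 : ∀ v ∈ Δ, v ≠ 0) (h : IsNestedFam Δ 𝕄)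
    {𝒢 : Set (Set V)} (hsub : 𝒢 ⊆ 𝕄) (hfin : 𝒢.Finite) :
    IsCompleteSet Δ (⋃₀ 𝒢) := by
  rcases Set.eq_empty_or_nonempty 𝒢 with rfl | ⟨S, hS⟩
  · simpa using compl_empty hΔ0
  · obtain ⟨M, hM, _⟩ := exists_le_max hfin hS
    have := (h.2 (maxMems 𝒢) ((maxMems_subset 𝒢).trans hsub) ⟨M, hM⟩ (maxMems_antichain 𝒢)).1
    rwa [sUnion_maxMems hfin] at this

lemma nested_disjoint_span (h : IsNestedFam Δ 𝕄)
    {𝒢 : Set (Set V)} (hsub : 𝒢 ⊆ 𝕄) (hfin : 𝒢.Finite) {T : Set V} (hT : T ∈ 𝕄)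
    (hd : ∀ S ∈ 𝒢, Disjoint S T) :
    Disjoint (span ℝ (⋃₀ 𝒢)) (span ℝ T) ∧
      Δ ∩ (span ℝ T ⊔ span ℝ (⋃₀ 𝒢) : Submodule ℝ V) = T ∪ ⋃₀ 𝒢 := by
  have hTne : T.Nonempty := nested_mem_nonempty h hT
  have hMne : ∀ S ∈ maxMems 𝒢, S.Nonempty := fun S hS =>
    nested_mem_nonempty h (hsub (maxMems_subset 𝒢 hS))
  have hMT : ∀ S ∈ maxMems 𝒢, S ≠ T := by
    intro S hS hEq
    obtain ⟨x, hx⟩ := hMne S hS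
    exact Set.disjoint_left.1 (hd S (maxMems_subset 𝒢 hS)) hx (hEq ▸ hx)
  set 𝒯 := insert T (maxMems 𝒢) with h𝒯def
  have h𝒯sub : 𝒯 ⊆ 𝕄 := by
    rintro X (rfl | hX)
    exacts [hT, hsub (maxMems_subset 𝒢 hX)]
  have hanti : ∀ T₁ ∈ 𝒯, ∀ T₂ ∈ 𝒯, T₁ ⊆ T₂ → T₁ = T₂ := by
    rintro T₁ (rfl | hT₁) T₂ (rfl | hT₂) hsub'
    · rfl
    · exfalso
      obtain ⟨x, hx⟩ := hTne
      exact Set.disjoint_left.1 (hd T₂ (maxMems_subset 𝒢 hT₂)) (hsub' hx) hx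
    · exfalso
      obtain ⟨x, hx⟩ := hMne T₁ hT₁
      exact Set.disjoint_left.1 (hd T₁ (maxMems_subset 𝒢 hT₁)) hx (hsub' hx)
    · exact maxMems_antichain 𝒢 T₁ hT₁ T₂ hT₂ hsub'
  obtain ⟨hcomp, hcomps⟩ := h.2 𝒯 h𝒯sub ⟨T, Or.inl rfl⟩ hanti
  have hUT : ⋃₀ 𝒯 = T ∪ ⋃₀ 𝒢 := by
    rw [h𝒯def, Set.sUnion_insert, sUnion_maxMems hfin]
  have hdisj : Disjoint (span ℝ (⋃₀ 𝒢)) (span ℝ T) := by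
    have hind := (indep_iff 𝒯).1 hcomps.2.2.2.2.1 T (Or.inl rfl)
    refine (hind.mono_right ?_).symm
    apply Submodule.span_mono
    rw [← sUnion_maxMems hfin]
    apply Set.sUnion_subset_sUnion
    intro S hS
    exact ⟨Or.inr hS, hMT S hS⟩
  refine ⟨hdisj, ?_⟩
  have : Δ ∩ (span ℝ (⋃₀ 𝒯) : Set V) = ⋃₀ 𝒯 := hcomp
  rw [hUT] at this
  rw [← this, Submodule.span_union]

end Aux4

section Aux5
variable {V : Type*} [AddCommGroup V] [Module ℝ V] [FiniteDimensional ℝ V]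
open Submodule Set Module

/-- the union of the proper sub-members of `T` in `𝕄` -/
def propsU (𝕄 : Set (Set V)) (T : Set V) : Set V := ⋃₀ {S ∈ 𝕄 | S ⊂ T}

variable {Δ : Set V} {𝕄 : Set (Set V)}

lemma propsU_subset {T : Set V} : propsU 𝕄 T ⊆ T :=
  Set.sUnion_subset fun S hS => hS.2.1

lemma rank_propsU_lt (hΔ0 : ∀ v ∈ Δ, v ≠ 0) (h : IsNestedFam Δ 𝕄) (hfin : 𝕄.Finite)
    {T : Set V} (hT : T ∈ 𝕄) :
    finrank ℝ (span ℝ (propsU 𝕄 T)) < finrank ℝ (span ℝ T) := by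
  set A := propsU 𝕄 T with hA
  have hle : span ℝ A ≤ span ℝ T := Submodule.span_mono propsU_subset
  by_contra hnlt
  push_neg at hnlt
  have hspEq : span ℝ A = span ℝ T := Submodule.eq_of_le_of_finrank_le hle hnlt
  have hTirr := h.1 T hT
  rcases Set.eq_empty_or_nonempty {S | S ∈ 𝕄 ∧ S ⊂ T} with hemp | ⟨S₀, hS₀⟩
  · have : A = ∅ := by rw [hA, propsU, hemp, Set.sUnion_empty]
    rw [this, Submodule.span_empty] at hspEq
    obtain ⟨t, ht⟩ := hTirr.2.1
    have : t ∈ Δ ∩ (span ℝ T : Set V) := by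
      rw [hTirr.1]; exact ht
    rw [← hspEq] at this
    exact hΔ0 t this.1 ((Submodule.mem_bot ℝ).1 this.2)
  · -- A is complete and A = T, leading to a decomposition of T
    set 𝒢 := {S | S ∈ 𝕄 ∧ S ⊂ T} with h𝒢
    have h𝒢sub : 𝒢 ⊆ 𝕄 := fun S hS => hS.1
    have h𝒢fin : 𝒢.Finite := hfin.subset h𝒢sub
    obtain ⟨hcomp, hcomps⟩ := h.2 (maxMems 𝒢) ((maxMems_subset 𝒢).trans h𝒢sub)
      ((exists_le_max h𝒢fin hS₀).elim fun M hM => ⟨M, hM.1⟩) (maxMems_antichain 𝒢)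
    have hUA : ⋃₀ maxMems 𝒢 = A := sUnion_maxMems h𝒢fin
    have hAT : A = T := by
      have h1 : Δ ∩ (span ℝ A : Set V) = A := by rw [← hUA]; exact hcomp
      rw [hspEq] at h1
      rw [← h1, hTirr.1]
    obtain ⟨C, hC⟩ : (maxMems 𝒢).Nonempty := (exists_le_max h𝒢fin hS₀).elim fun M hM => ⟨M, hM.1⟩
    have hCT : C ⊂ T := (maxMems_subset 𝒢 hC).2
    have hrest : T \ C ⊆ ⋃₀ (maxMems 𝒢 \ {C}) := by
      intro x hx
      have : x ∈ ⋃₀ maxMems 𝒢 := by rw [hUA, hAT]; exact hx.1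
      obtain ⟨S, hS, hxS⟩ := this
      exact ⟨S, ⟨hS, fun hEq => hx.2 (hEq ▸ hxS)⟩, hxS⟩
    apply hTirr.2.2 C (T \ C)
    refine ⟨nested_mem_nonempty h (h𝒢sub (maxMems_subset 𝒢 hC)),
      Set.nonempty_of_ssubset hCT, Set.disjoint_sdiff_left.symm.mono_left Set.Subset.rfl,
      Set.union_diff_cancel hCT.1, ?_, ?_⟩
    · rw [← le_bot_iff]
      have hd := (indep_iff (maxMems 𝒢)).1 hcomps.2.2.2.2.1 C hC
      calc span ℝ C ⊓ span ℝ (T \ C)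
          ≤ span ℝ C ⊓ span ℝ (⋃₀ (maxMems 𝒢 \ {C})) :=
            inf_le_inf_left _ (Submodule.span_mono hrest)
        _ = ⊥ := disjoint_iff.1 hd
    · rw [← Submodule.span_union, Set.union_diff_cancel hCT.1]

lemma count_nested (hΔ0 : ∀ v ∈ Δ, v ≠ 0) :
    ∀ (n : ℕ) (𝕄 : Set (Set V)), IsNestedFam Δ 𝕄 → 𝕄.Finite → 𝕄.ncard = n →
      𝕄.ncard ≤ finrank ℝ (span ℝ (⋃₀ 𝕄)) ∧
      ((∀ T ∈ 𝕄, finrank ℝ (span ℝ T) ≤ finrank ℝ (span ℝ (propsU 𝕄 T)) + 1) →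
        𝕄.ncard = finrank ℝ (span ℝ (⋃₀ 𝕄))) := by
  intro n
  induction n using Nat.strong_induction_on with
  | _ n ih =>
  intro 𝕄 h hfin hn
  rcases Set.eq_empty_or_nonempty 𝕄 with rfl | ⟨S₀, hS₀⟩
  · refine ⟨by simp, fun _ => ?_⟩
    rw [Set.sUnion_empty, Submodule.span_empty, Set.ncard_empty]
    exact (finrank_bot ℝ V).symm
  -- pick a maximal element T*
  obtain ⟨T, hTmax, _⟩ := exists_le_max hfin hS₀
  have hT : T ∈ 𝕄 := hTmax.1
  set 𝕄' := 𝕄 \ {T} with h𝕄'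
  have h𝕄'sub : 𝕄' ⊆ 𝕄 := Set.diff_subset
  have h𝕄'nested : IsNestedFam Δ 𝕄' := nested_mono h h𝕄'sub
  have h𝕄'fin : 𝕄'.Finite := hfin.subset h𝕄'sub
  have hcard : 𝕄'.ncard + 1 = n := by rw [← hn]; exact Set.ncard_diff_singleton_add_one hT hfin
  -- T is not a proper subset of any member
  have hTnotlt : ∀ S ∈ 𝕄, ¬ T ⊂ S := fun S hS hTS => hTS.2 (hTmax.2 S hS hTS.1 ▸ Set.Subset.rfl)
  have hprops_eq : ∀ S ∈ 𝕄', propsU 𝕄' S = propsU 𝕄 S := by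
    intro S hS
    have hseteq : {S' ∈ 𝕄' | S' ⊂ S} = {S' ∈ 𝕄 | S' ⊂ S} := by
      ext S'
      simp only [Set.mem_setOf_eq, h𝕄', Set.mem_diff, Set.mem_singleton_iff]
      constructor
      · rintro ⟨⟨h1, _⟩, h2⟩; exact ⟨h1, h2⟩
      · rintro ⟨h1, h2⟩
        exact ⟨⟨h1, fun hEq => hTnotlt S hS.1 (hEq ▸ h2)⟩, h2⟩
    rw [propsU, propsU, hseteq]
  -- the members not below T are disjoint from T
  set 𝒟 := {S | S ∈ 𝕄' ∧ ¬ S ⊆ T} with h𝒟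
  have h𝒟sub : 𝒟 ⊆ 𝕄 := fun S hS => hS.1.1
  have h𝒟disj : ∀ S ∈ 𝒟, Disjoint S T := by
    intro S hS
    rcases nested_laminar h (h𝒟sub hS) hT with h1 | h1 | h1
    · exact absurd h1 hS.2
    · exfalso
      rcases eq_or_ne T S with rfl | hne
      · exact hS.1.2 rfl
      · exact hTnotlt S (h𝒟sub hS) ⟨h1, fun hc => hne (Set.Subset.antisymm h1 hc)⟩
    · exact h1
  set D := ⋃₀ 𝒟 with hD
  set A := propsU 𝕄 T with hA
  obtain ⟨hDdisj, _⟩ := nested_disjoint_span h h𝒟sub (hfin.subset h𝒟sub) hT h𝒟disj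
  -- decompositions of the unions
  have hU𝕄 : ⋃₀ 𝕄 = T ∪ D := by
    apply Set.Subset.antisymm
    · rintro x ⟨S, hS, hx⟩
      by_cases hsub : S ⊆ T
      · exact Or.inl (hsub hx)
      · exact Or.inr ⟨S, ⟨⟨hS, fun hEq => hsub (hEq ▸ Set.Subset.rfl)⟩, hsub⟩, hx⟩
    · rintro x (hx | hx)
      · exact ⟨T, hT, hx⟩
      · obtain ⟨S, hS, hxS⟩ := hx
        exact ⟨S, h𝒟sub hS, hxS⟩
  have hU𝕄' : ⋃₀ 𝕄' = A ∪ D := by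
    apply Set.Subset.antisymm
    · rintro x ⟨S, hS, hx⟩
      by_cases hsub : S ⊆ T
      · exact Or.inl ⟨S, ⟨hS.1, ⟨hsub, fun hc => hS.2 (Set.Subset.antisymm hsub hc)⟩⟩, hx⟩
      · exact Or.inr ⟨S, ⟨hS, hsub⟩, hx⟩
    · rintro x (hx | hx)
      · obtain ⟨S, hS, hxS⟩ := hx
        exact ⟨S, ⟨hS.1, fun hEq => hS.2.ne hEq⟩, hxS⟩
      · obtain ⟨S, hS, hxS⟩ := hx
        exact ⟨S, hS.1, hxS⟩
  have hAleT : span ℝ A ≤ span ℝ T := Submodule.span_mono propsU_subset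
  have hADdisj' : Disjoint (span ℝ A) (span ℝ D) := hDdisj.symm.mono_left hAleT
  have hTDdisj : Disjoint (span ℝ T) (span ℝ D) := hDdisj.symm
  have hrank1 : finrank ℝ (span ℝ (⋃₀ 𝕄)) = finrank ℝ (span ℝ T) + finrank ℝ (span ℝ D) := by
    rw [hU𝕄, Submodule.span_union]
    have := Submodule.finrank_sup_add_finrank_inf_eq (span ℝ T) (span ℝ D)
    rw [disjoint_iff.1 hTDdisj, finrank_bot ℝ V, add_zero] at this
    exact this
  have hrank2 : finrank ℝ (span ℝ (⋃₀ 𝕄')) = finrank ℝ (span ℝ A) + finrank ℝ (span ℝ D) := by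
    rw [hU𝕄', Submodule.span_union]
    have := Submodule.finrank_sup_add_finrank_inf_eq (span ℝ A) (span ℝ D)
    rw [disjoint_iff.1 hADdisj', finrank_bot ℝ V, add_zero] at this
    exact this
  have hAlt : finrank ℝ (span ℝ A) < finrank ℝ (span ℝ T) :=
    rank_propsU_lt hΔ0 h hfin hT
  obtain ⟨ihle, iheq⟩ := ih 𝕄'.ncard (by omega) 𝕄' h𝕄'nested h𝕄'fin rfl
  constructor
  · rw [hrank1]
    rw [hrank2] at ihle
    omega
  · intro hbound
    have hbound' : ∀ S ∈ 𝕄', finrank ℝ (span ℝ S) ≤ finrank ℝ (span ℝ (propsU 𝕄' S)) + 1 := by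
      intro S hS
      rw [hprops_eq S hS]
      exact hbound S hS.1
    have heq' := iheq hbound'
    have hTbound := hbound T hT
    rw [← hA] at hTbound
    rw [hrank1]
    rw [hrank2] at heq'
    omega

end Aux5

section Aux6
variable {V : Type*} [AddCommGroup V] [Module ℝ V] [FiniteDimensional ℝ V]
open Submodule Set Module

lemma ext_lemma {Δ : Set V} (hΔfin : Δ.Finite) (hΔ0 : ∀ v ∈ Δ, v ≠ 0)
    {𝕄 : Set (Set V)} (h : IsNestedFam Δ 𝕄) (hfin : 𝕄.Finite)
    {R A : Set V} (hR : IsCompleteSet Δ R) (hAΔ : A ⊆ Δ) (hAR : A ⊆ R)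
    {x : V} (hxR : x ∈ R) (hxA : x ∉ (span ℝ A : Set V))
    (hsmall : ∀ S ∈ 𝕄, S ⊆ Δ ∩ (span ℝ (A ∪ {x}) : Set V) → S ⊆ A)
    (hrel : ∀ S ∈ 𝕄, S ⊆ A ∨ Disjoint S R ∨ Δ ∩ (span ℝ (A ∪ {x}) : Set V) ⊆ S)
    (hdisj : ∀ 𝒮 ⊆ 𝕄, (∀ S ∈ 𝒮, Disjoint S R) →
        Disjoint (span ℝ (⋃₀ 𝒮)) (span ℝ R) ∧
          Δ ∩ (span ℝ R ⊔ span ℝ (⋃₀ 𝒮) : Submodule ℝ V) = R ∪ ⋃₀ 𝒮) :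
    ∃ N, N ∉ 𝕄 ∧ IsNestedFam Δ (insert N 𝕄) := by
  have hRΔ : R ⊆ Δ := compl_subset hR
  have hxΔ : x ∈ Δ := hRΔ hxR
  set B := Δ ∩ (span ℝ (A ∪ {x}) : Set V) with hBdef
  have hAxΔ : A ∪ {x} ⊆ Δ := Set.union_subset hAΔ (Set.singleton_subset_iff.2 hxΔ)
  have hAxR : A ∪ {x} ⊆ R := Set.union_subset hAR (Set.singleton_subset_iff.2 hxR)
  have hBspan : span ℝ B = span ℝ (A ∪ {x}) := completion_span hAxΔ
  have hBcomp : IsCompleteSet Δ B := completion_complete hAxΔ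
  have hxB : x ∈ B := ⟨hxΔ, Submodule.subset_span (Or.inr rfl)⟩
  have hBR : B ⊆ R := by
    intro y hy
    rw [← hR]
    exact ⟨hy.1, SetLike.le_def.1 (Submodule.span_le.2
      (fun z hz => Submodule.subset_span (hAxR hz))) hy.2⟩
  have hBspanR : span ℝ B ≤ span ℝ R := Submodule.span_mono hBR
  obtain ⟨𝒞, h𝒞⟩ := exists_comps hΔfin hΔ0 B hBcomp ⟨x, hxB⟩
  have hxB' : x ∈ ⋃₀ 𝒞 := h𝒞.2.2.2.1.symm ▸ hxB
  obtain ⟨N, hN𝒞, hxN⟩ := hxB'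
  have hNirr : IsIrred Δ N := h𝒞.2.1 N hN𝒞
  have hNB : N ⊆ B := h𝒞.2.2.2.1 ▸ Set.subset_sUnion_of_mem hN𝒞
  have hNnotM : N ∉ 𝕄 := by
    intro hNM
    exact hxA (Submodule.subset_span (hsmall N hNM hNB hxN))
  set W := span ℝ (⋃₀ (𝒞 \ {N})) with hWdef
  have hNW : Disjoint (span ℝ N) W := (indep_iff 𝒞).1 h𝒞.2.2.2.2.1 N hN𝒞
  have hCsub : ∀ C ∈ 𝒞, C ⊆ B := fun C hC => h𝒞.2.2.2.1 ▸ Set.subset_sUnion_of_mem hC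
  have hNspanR : span ℝ N ≤ span ℝ R := (Submodule.span_mono hNB).trans hBspanR
  refine ⟨N, hNnotM, ?_, ?_⟩
  · rintro T (rfl | hT)
    exacts [hNirr, h.1 T hT]
  intro 𝒯 h𝒯sub h𝒯ne hanti
  by_cases hN𝒯 : N ∈ 𝒯
  swap
  · -- 𝒯 ⊆ 𝕄
    have h𝒯M : 𝒯 ⊆ 𝕄 := by
      intro S hS
      rcases h𝒯sub hS with rfl | hS'
      · exact absurd hS hN𝒯
      · exact hS'
    exact h.2 𝒯 h𝒯M h𝒯ne hanti
  -- the interesting case : N ∈ 𝒯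
  have h𝒯M : 𝒯 \ {N} ⊆ 𝕄 := by
    rintro S ⟨hS, hSne⟩
    rcases h𝒯sub hS with rfl | hS'
    · exact absurd rfl hSne
    · exact hS'
  have h𝒯Mfin : (𝒯 \ {N}).Finite := hfin.subset h𝒯M
  -- classification of the members of 𝒯 other than N
  have hclass : ∀ S ∈ 𝒯 \ {N}, (S ⊆ A) ∨ Disjoint S R := by
    rintro S ⟨hS, hSne⟩
    rcases hrel S (h𝒯M ⟨hS, hSne⟩) with h1 | h1 | h1
    · exact Or.inl h1
    · exact Or.inr h1
    · exact absurd (hanti N hN𝒯 S hS (hNB.trans h1)).symm hSne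
  set 𝒯₁ := {S ∈ 𝒯 \ {N} | S ⊆ A} with h𝒯₁
  set 𝒮 := {S ∈ 𝒯 \ {N} | Disjoint S R} with h𝒮
  set E₁ := ⋃₀ 𝒯₁ with hE₁def
  set E₂ := ⋃₀ 𝒮 with hE₂def
  set E := ⋃₀ (𝒯 \ {N}) with hEdef
  have hEsplit : E = E₁ ∪ E₂ := by
    apply Set.Subset.antisymm
    · rintro y ⟨S, hS, hy⟩
      rcases hclass S hS with h1 | h1
      · exact Or.inl ⟨S, ⟨hS, h1⟩, hy⟩
      · exact Or.inr ⟨S, ⟨hS, h1⟩, hy⟩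
    · rintro y (⟨S, hS, hy⟩ | ⟨S, hS, hy⟩)
      exacts [⟨S, hS.1, hy⟩, ⟨S, hS.1, hy⟩]
  have h𝒮M : 𝒮 ⊆ 𝕄 := fun S hS => h𝒯M hS.1
  have h𝒯₁M : 𝒯₁ ⊆ 𝕄 := fun S hS => h𝒯M hS.1
  obtain ⟨hd1, hd2⟩ := hdisj 𝒮 h𝒮M (fun S hS => hS.2)
  rw [← hE₂def] at hd1 hd2
  -- span E₁ is inside W (the other components of B)
  have hE₁W : span ℝ E₁ ≤ W := by
    apply Submodule.span_le.2
    apply Set.sUnion_subset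
    rintro S ⟨hSmem, hSA⟩
    obtain ⟨C, hC, hSC⟩ := subset_comp h𝒞 (h.1 S (h𝒯M hSmem))
      (hSA.trans (fun a ha => ⟨hAΔ ha, Submodule.subset_span (Or.inl ha)⟩))
    have hCN : C ≠ N := by
      intro hEq
      exact hSmem.2 (hanti S hSmem.1 N hN𝒯 (hEq ▸ hSC))
    intro y hy
    exact Submodule.subset_span ⟨C, ⟨hC, hCN⟩, hSC hy⟩
  have hE₁R : span ℝ E₁ ≤ span ℝ R := by
    apply Submodule.span_mono
    exact Set.sUnion_subset fun S hS => hS.2.trans hAR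
  have hWB : W ≤ span ℝ B := by
    apply Submodule.span_le.2
    apply Set.sUnion_subset
    rintro C ⟨hC, _⟩
    exact fun y hy => Submodule.subset_span (hCsub C hC hy)
  -- key disjointness : span N ⊓ span E = ⊥
  have hkey : Disjoint (span ℝ N) (span ℝ E) := by
    have h1 : Disjoint (span ℝ N) (span ℝ E₁ ⊔ span ℝ E₂) :=
      latt hNspanR hE₁R (hNW.mono_right hE₁W) hd1
    refine h1.mono_right ?_
    rw [hEsplit, Submodule.span_union]
  -- the union
  have hU𝒯 : ⋃₀ 𝒯 = N ∪ E := by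
    conv_lhs => rw [← Set.insert_eq_self.2 hN𝒯, ← Set.insert_diff_singleton]
    rw [Set.sUnion_insert]
  -- completeness of N ∪ E
  have hcompl : IsCompleteSet Δ (N ∪ E) := by
    have hsubΔ : N ∪ E ⊆ Δ := Set.union_subset (compl_subset hNirr.1)
      (Set.sUnion_subset fun S hS => nested_mem_subset h (h𝒯M hS))
    apply Set.Subset.antisymm
    swap
    · exact fun y hy => ⟨hsubΔ hy, Submodule.subset_span hy⟩
    rintro y ⟨hyΔ, hysp⟩
    have hNE₁R : span ℝ (N ∪ E₁) ≤ span ℝ R := by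
      rw [Submodule.span_union]
      exact sup_le hNspanR hE₁R
    have hy2 : y ∈ (span ℝ (N ∪ E₁) ⊔ span ℝ E₂ : Submodule ℝ V) := by
      have : span ℝ (N ∪ E) ≤ span ℝ (N ∪ E₁) ⊔ span ℝ E₂ := by
        rw [hEsplit, ← Set.union_assoc, Submodule.span_union]
      exact this hysp
    have hyRE₂ : y ∈ R ∪ E₂ := by
      rw [← hd2]
      refine ⟨hyΔ, ?_⟩
      exact SetLike.le_def.1 (sup_le (hNE₁R.trans le_sup_left) le_sup_right) hy2
    rcases hyRE₂ with hyR | hyE₂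
    swap
    · exact Or.inr (hEsplit ▸ Or.inr hyE₂)
    -- y ∈ R : kill the E₂ part
    obtain ⟨u, hu, v, hv, huv⟩ := Submodule.mem_sup.1 hy2
    have hv0 : v = 0 := by
      have hvR : v ∈ span ℝ R := by
        have : v = y - u := by rw [← huv]; abel
        rw [this]
        exact Submodule.sub_mem _ (Submodule.subset_span hyR) (hNE₁R hu)
      exact (Submodule.disjoint_def.1 hd1) v hv hvR
    have hyu : y = u := by rw [← huv, hv0, add_zero]
    subst hyu
    -- now y ∈ span (N ∪ E₁) ≤ span B, and y ∈ Δ, so y ∈ B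
    have huB : y ∈ B := by
      rw [← hBcomp]
      refine ⟨hyΔ, ?_⟩
      have : span ℝ (N ∪ E₁) ≤ span ℝ B := by
        rw [Submodule.span_union]
        exact sup_le (Submodule.span_mono hNB) (hE₁W.trans hWB)
      exact this hu
    have huC : y ∈ ⋃₀ 𝒞 := h𝒞.2.2.2.1.symm ▸ huB
    obtain ⟨C, hC, huC'⟩ := huC
    rcases eq_or_ne C N with rfl | hCN
    · exact Or.inl huC'
    -- y is in another component : kill the N part
    have huW : y ∈ W := Submodule.subset_span ⟨C, ⟨hC, hCN⟩, huC'⟩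
    have hu2 : y ∈ (span ℝ N ⊔ span ℝ E₁ : Submodule ℝ V) := by
      rwa [← Submodule.span_union]
    obtain ⟨n, hn, e, he, hne⟩ := Submodule.mem_sup.1 hu2
    have hn0 : n = 0 := by
      have hnW : n ∈ W := by
        have : n = y - e := by rw [← hne]; abel
        rw [this]
        exact Submodule.sub_mem _ huW (hE₁W he)
      exact (Submodule.disjoint_def.1 hNW) n hn hnW
    have hye : y = e := by rw [← hne, hn0, zero_add]
    have hE₁compl : IsCompleteSet Δ E₁ := nested_union_complete hΔ0 h h𝒯₁M (hfin.subset h𝒯₁M)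
    have : y ∈ E₁ := by
      rw [← hE₁compl]
      exact ⟨hyΔ, hye ▸ he⟩
    exact Or.inr (hEsplit ▸ Or.inl this)
  constructor
  · rwa [hU𝒯]
  -- the components
  rcases Set.eq_empty_or_nonempty (𝒯 \ {N}) with hTN | hTNne
  · have h𝒯N : 𝒯 = {N} := by
      apply Set.Subset.antisymm
      · intro S hS
        by_contra hSne
        exact Set.eq_empty_iff_forall_notMem.1 hTN S ⟨hS, hSne⟩
      · exact Set.singleton_subset_iff.2 hN𝒯
    rw [h𝒯N, Set.sUnion_singleton]
    exact single_comp hNirr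
  · obtain ⟨hEcompl, hEcomps⟩ := h.2 (𝒯 \ {N}) h𝒯M hTNne
      (fun T₁ hT₁ T₂ hT₂ hsub => hanti T₁ hT₁.1 T₂ hT₂.1 hsub)
    have := merge hΔ0 hEcomps (single_comp hNirr) hkey.symm
    rw [hU𝒯, Set.union_comm N E]
    rwa [Set.diff_union_self, Set.union_eq_self_of_subset_right
      (Set.singleton_subset_iff.2 hN𝒯)] at this

end Aux6

/-- every maximal nested family of irreducible subsets of `Δ`
(maximal under inclusion among nested families) has exactly `r = dim V`
elements. -/
theorem stmt_6 {V : Type*} [AddCommGroup V] [Module ℝ V] [FiniteDimensional ℝ V]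
    (r : ℕ) (hr : Module.finrank ℝ V = r)
    (Δ : Set V) (hΔfin : Δ.Finite) (hΔspan : Submodule.span ℝ Δ = ⊤)
    (hΔ0 : ∀ v ∈ Δ, v ≠ 0)
    (hΔpair : ∀ v ∈ Δ, ∀ w ∈ Δ, v ≠ w → ∀ c : ℝ, w ≠ c • v)
    (𝕄 : Set (Set V)) (h𝕄 : IsNestedFam Δ 𝕄)
    (hmax : ∀ 𝕄' : Set (Set V), IsNestedFam Δ 𝕄' → 𝕄 ⊆ 𝕄' → 𝕄' = 𝕄) :
    𝕄.ncard = r := by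
  classical
  open Submodule Set Module in
  have hΔcompl : IsCompleteSet Δ Δ := by
    unfold IsCompleteSet
    rw [hΔspan]
    simp
  have hfin𝕄 : 𝕄.Finite :=
    hΔfin.finite_subsets.subset (fun T hT => nested_mem_subset h𝕄 hT)
  obtain ⟨hle, heq⟩ := count_nested hΔ0 𝕄.ncard 𝕄 h𝕄 hfin𝕄 rfl
  have hrank_le : Module.finrank ℝ (Submodule.span ℝ (⋃₀ 𝕄)) ≤ r :=
    hr ▸ Submodule.finrank_le _
  by_contra hne
  have hlt : 𝕄.ncard < r := lt_of_le_of_ne (hle.trans hrank_le) hne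
  have hcontra : ∃ N, N ∉ 𝕄 ∧ IsNestedFam Δ (insert N 𝕄) := by
    by_cases hbound : ∀ T ∈ 𝕄, Module.finrank ℝ (Submodule.span ℝ T) ≤
        Module.finrank ℝ (Submodule.span ℝ (propsU 𝕄 T)) + 1
    · -- total span is too small : extend at the top, R = Δ
      have h1 := heq hbound
      have h2 : Module.finrank ℝ (Submodule.span ℝ (⋃₀ 𝕄)) < r := h1 ▸ hlt
      set A := ⋃₀ 𝕄 with hAdef
      have hAΔ : A ⊆ Δ := Set.sUnion_subset fun S hS => nested_mem_subset h𝕄 hS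
      have hx : ∃ x ∈ Δ, x ∉ (Submodule.span ℝ A : Set V) := by
        by_contra hno
        push_neg at hno
        have : Submodule.span ℝ Δ ≤ Submodule.span ℝ A := Submodule.span_le.2 hno
        rw [hΔspan] at this
        have htop : Submodule.span ℝ A = ⊤ := top_le_iff.1 this
        rw [htop] at h2
        rw [finrank_top ℝ V] at h2
        omega
      obtain ⟨x, hxΔ, hxA⟩ := hx
      apply ext_lemma hΔfin hΔ0 h𝕄 hfin𝕄 hΔcompl hAΔ hAΔ hxΔ hxA
      · exact fun S hS _ => Set.subset_sUnion_of_mem hS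
      · exact fun S hS => Or.inl (Set.subset_sUnion_of_mem hS)
      · intro 𝒮 h𝒮 hd
        have h𝒮emp : 𝒮 = ∅ := by
          rw [Set.eq_empty_iff_forall_notMem]
          intro S hS
          obtain ⟨y, hy⟩ := nested_mem_nonempty h𝕄 (h𝒮 hS)
          exact Set.disjoint_left.1 (hd S hS) hy (nested_mem_subset h𝕄 (h𝒮 hS) hy)
        subst h𝒮emp
        constructor
        · rw [Set.sUnion_empty, Submodule.span_empty]
          exact disjoint_bot_left
        · rw [Set.sUnion_empty, Submodule.span_empty, sup_bot_eq, hΔspan]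
          simp
    · -- some member has a gap of size ≥ 2 : extend below T
      push_neg at hbound
      obtain ⟨T, hT, hgt⟩ := hbound
      set A := propsU 𝕄 T with hAdef
      have hTirr := h𝕄.1 T hT
      have hTΔ : T ⊆ Δ := nested_mem_subset h𝕄 hT
      have hAT : A ⊆ T := propsU_subset
      have hAΔ : A ⊆ Δ := hAT.trans hTΔ
      have hx : ∃ x ∈ T, x ∉ (Submodule.span ℝ A : Set V) := by
        by_contra hno
        push_neg at hno
        have : Submodule.span ℝ T ≤ Submodule.span ℝ A := Submodule.span_le.2 hno
        have := Submodule.finrank_mono this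
        omega
      obtain ⟨x, hxT, hxA⟩ := hx
      have hx0 : x ≠ 0 := hΔ0 x (hTΔ hxT)
      -- rank of span (A ∪ {x}) is < rank of span T
      have hrkAx : Module.finrank ℝ (Submodule.span ℝ (A ∪ {x})) <
          Module.finrank ℝ (Submodule.span ℝ T) := by
        have h1 : Submodule.span ℝ (A ∪ {x}) = Submodule.span ℝ A ⊔ Submodule.span ℝ {x} :=
          Submodule.span_union A {x}
        have h2 := Submodule.finrank_sup_add_finrank_inf_eq
          (Submodule.span ℝ A) (Submodule.span ℝ ({x} : Set V))
        have h3 : Module.finrank ℝ (Submodule.span ℝ ({x} : Set V)) = 1 :=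
          finrank_span_singleton hx0
        rw [h1]
        omega
      have hspanAxT : Submodule.span ℝ (A ∪ {x}) ≤ Submodule.span ℝ T :=
        Submodule.span_le.2 (Set.union_subset
          (fun a ha => Submodule.subset_span (hAT ha))
          (fun a ha => Submodule.subset_span (by rw [Set.mem_singleton_iff.1 ha]; exact hxT)))
      have hBT : Δ ∩ (Submodule.span ℝ (A ∪ {x}) : Set V) ⊆ T := by
        intro y hy
        rw [← hTirr.1]
        exact ⟨hy.1, hspanAxT hy.2⟩
      apply ext_lemma hΔfin hΔ0 h𝕄 hfin𝕄 hTirr.1 hAΔ hAT hxT hxA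
      · -- hsmall
        intro S hS hSB
        have hST : S ⊆ T := hSB.trans hBT
        rcases eq_or_ne S T with rfl | hSne
        · exfalso
          have : Submodule.span ℝ S ≤ Submodule.span ℝ (A ∪ {x}) :=
            Submodule.span_le.2 (fun a ha => (hSB ha).2)
          have := Submodule.finrank_mono this
          omega
        · exact Set.subset_sUnion_of_mem ⟨hS, ⟨hST, fun hc => hSne (Set.Subset.antisymm hST hc)⟩⟩
      · -- hrel
        intro S hS
        rcases nested_laminar h𝕄 hS hT with h1 | h1 | h1
        · rcases eq_or_ne S T with rfl | hSne
          · exact Or.inr (Or.inr hBT)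
          · exact Or.inl (Set.subset_sUnion_of_mem
              ⟨hS, ⟨h1, fun hc => hSne (Set.Subset.antisymm h1 hc)⟩⟩)
        · exact Or.inr (Or.inr (hBT.trans h1))
        · exact Or.inr (Or.inl h1)
      · -- hdisj
        intro 𝒮 h𝒮 hd
        exact nested_disjoint_span h𝕄 h𝒮 (hfin𝕄.subset h𝒮) hT hd
  obtain ⟨N, hN, hnested⟩ := hcontra
  have hEq := hmax _ hnested (Set.subset_insert N 𝕄)
  exact hN (hEq ▸ Set.mem_insert N 𝕄)
end

section
/- A connected subgraph Λ of Γ is A-complete if and only if it is complete, i.e., Λ contains every edge of Γ both of whose endpoints are vertices of Λ. More generally, an arbitrary subgraph of Γ is A-complete if and only if each of its connected components is A-complete. -/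
/-- The underlying simple graph of the subgraph of an oriented graph given by the
set of edges `A` (adjacency through edges in `A`). -/
def graphSub {Vt E : Type*} (ini fin : E → Vt) (A : Set E) : SimpleGraph Vt where
  Adj v w := v ≠ w ∧ ∃ a ∈ A, s(ini a, fin a) = s(v, w)
  symm := by
    constructor
    rintro v w ⟨h, a, ha, ha'⟩
    exact ⟨h.symm, a, ha, ha'.trans (Sym2.eq_swap)⟩
  loopless := ⟨fun v h => h.1 rfl⟩

/-- The vector `x_a = e_{f(a)} - e_{i(a)}` associated to an edge `a`. -/
def edgeVec {Vt E : Type*} [DecidableEq Vt] (ini fin : E → Vt) (a : E) : Vt → ℝ :=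
  Pi.single (fin a) 1 - Pi.single (ini a) 1

/-- The vertex set of the subgraph with edge set `A`: all endpoints of edges of `A`. -/
def vertexSet {Vt E : Type*} (ini fin : E → Vt) (A : Set E) : Set Vt :=
  {v | ∃ a ∈ A, v = ini a ∨ v = fin a}

/-- The subgraph with edge set `A` is connected: any two of its vertices are
joined by a path through edges of `A`. -/
def EdgeConnected {Vt E : Type*} (ini fin : E → Vt) (A : Set E) : Prop :=
  ∀ a ∈ A, ∀ b ∈ A, (graphSub ini fin A).Reachable (ini a) (ini b)

/-- The subgraph with edge set `A` is A-complete: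
`span {x_a : a ∈ A} ∩ Δ_Γ = {x_a : a ∈ A}`. -/
def IsAComplete {Vt E : Type*} [DecidableEq Vt] (ini fin : E → Vt) (A : Set E) : Prop :=
  (Submodule.span ℝ (edgeVec ini fin '' A) : Set (Vt → ℝ)) ∩
      Set.range (edgeVec ini fin) = edgeVec ini fin '' A

/-!
For an edge `b` of `Γ`, `x_b` lies in `span {x_a : a ∈ A}` iff `i(b)` and `f(b)` lie in one
connected component of `Γ_A`: a path in `Γ_A` writes `x_b` as a signed sum of the `x_a`, and
conversely the linear form summing the coordinates over the component of `i(b)` vanishes on every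
`x_a` with `a ∈ A`, but not on `x_b` unless `f(b)` is in that component. As `b ↦ x_b` is injective,
A-completeness of `Γ_A` thus means that every edge of `Γ` joining two vertices of one component of
`Γ_A` lies in `A`. For connected `Γ_A` this is completeness, and the condition passes to the
components and back.
-/

section EdgeGraph

variable {Vt E : Type*} (ini fin : E → Vt)

theorem graphSub_mono {A B : Set E} (hAB : A ⊆ B) : graphSub ini fin A ≤ graphSub ini fin B :=
  fun _ _ ⟨hne, a, ha, hs⟩ => ⟨hne, a, hAB ha, hs⟩

variable {ini fin}

theorem reachable_ini_fin_of_mem {A : Set E} {a : E} (ha : a ∈ A) :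
    (graphSub ini fin A).Reachable (ini a) (fin a) := by
  by_cases h : ini a = fin a
  · rw [h]
  · exact SimpleGraph.Adj.reachable ⟨h, a, ha, rfl⟩

theorem exists_reachable_of_mem_vertexSet {A : Set E} {v : Vt} (hv : v ∈ vertexSet ini fin A) :
    ∃ a ∈ A, (graphSub ini fin A).Reachable (ini a) v := by
  obtain ⟨a, ha, rfl | rfl⟩ := hv
  · exact ⟨a, ha, .refl _⟩
  · exact ⟨a, ha, reachable_ini_fin_of_mem ha⟩

theorem mem_vertexSet_of_reachable {A : Set E} {v w : Vt}
    (h : (graphSub ini fin A).Reachable v w) (hne : v ≠ w) : v ∈ vertexSet ini fin A := by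
  obtain ⟨p⟩ := h
  cases p with
  | nil => exact absurd rfl hne
  | cons hadj _ =>
    obtain ⟨-, a, ha, hs⟩ := hadj
    rcases Sym2.eq_iff.mp hs with ⟨h, -⟩ | ⟨-, h⟩
    · exact ⟨a, ha, .inl h.symm⟩
    · exact ⟨a, ha, .inr h.symm⟩

theorem EdgeConnected.reachable {A : Set E} (hA : EdgeConnected ini fin A) {v w : Vt}
    (hv : v ∈ vertexSet ini fin A) (hw : w ∈ vertexSet ini fin A) :
    (graphSub ini fin A).Reachable v w := by
  obtain ⟨a, ha, hav⟩ := exists_reachable_of_mem_vertexSet hv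
  obtain ⟨b, hb, hbw⟩ := exists_reachable_of_mem_vertexSet hw
  exact hav.symm.trans ((hA a ha b hb).trans hbw)

variable (ini fin) in
def componentEdges (A : Set E) (v : Vt) : Set E :=
  {b ∈ A | (graphSub ini fin A).Reachable v (ini b)}

variable (ini fin) in
theorem componentEdges_subset (A : Set E) (r : Vt) : componentEdges ini fin A r ⊆ A :=
  fun _ hb => hb.1

theorem reachable_componentEdges {A : Set E} {r v w : Vt}
    (hrv : (graphSub ini fin A).Reachable r v) (hvw : (graphSub ini fin A).Reachable v w) :
    (graphSub ini fin (componentEdges ini fin A r)).Reachable v w := by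
  obtain ⟨p⟩ := hvw
  induction p with
  | nil => rfl
  | @cons u u' w hadj p ih =>
    obtain ⟨hne, c, hc, hs⟩ := hadj
    have hru' := hrv.trans (SimpleGraph.Adj.reachable ⟨hne, c, hc, hs⟩)
    have hrc : (graphSub ini fin A).Reachable r (ini c) := by
      rcases Sym2.eq_iff.mp hs with ⟨h, -⟩ | ⟨h, -⟩ <;> rw [h] <;> assumption
    have hadj : (graphSub ini fin (componentEdges ini fin A r)).Adj u u' :=
      ⟨hne, c, ⟨hc, hrc⟩, hs⟩
    exact hadj.reachable.trans (ih hru')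

variable (ini fin) in
def ContainsReachableEdges (A : Set E) : Prop :=
  ∀ b, (graphSub ini fin A).Reachable (ini b) (fin b) → b ∈ A

theorem EdgeConnected.containsReachableEdges_iff (hloop : ∀ a, ini a ≠ fin a) {A : Set E}
    (hA : EdgeConnected ini fin A) :
    ContainsReachableEdges ini fin A ↔
      ∀ a, ini a ∈ vertexSet ini fin A → fin a ∈ vertexSet ini fin A → a ∈ A :=
  ⟨fun h a hi hf => h a (hA.reachable hi hf), fun h b hb =>
    h b (mem_vertexSet_of_reachable hb (hloop b))
      (mem_vertexSet_of_reachable hb.symm (hloop b).symm)⟩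

theorem ContainsReachableEdges.componentEdges (hloop : ∀ a, ini a ≠ fin a) {A : Set E}
    (hA : ContainsReachableEdges ini fin A) (r : Vt) :
    ContainsReachableEdges ini fin (componentEdges ini fin A r) := by
  intro b hb
  have hmono := graphSub_mono ini fin (componentEdges_subset ini fin A r)
  obtain ⟨c, hc, hcb⟩ :=
    exists_reachable_of_mem_vertexSet (mem_vertexSet_of_reachable hb (hloop b))
  exact ⟨hA b (hb.mono hmono), hc.2.trans (hcb.mono hmono)⟩

theorem containsReachableEdges_of_componentEdges (hloop : ∀ a, ini a ≠ fin a) {A : Set E}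
    (h : ∀ a ∈ A, ContainsReachableEdges ini fin (componentEdges ini fin A (ini a))) :
    ContainsReachableEdges ini fin A := by
  intro b hb
  obtain ⟨c, hc, hcb⟩ :=
    exists_reachable_of_mem_vertexSet (mem_vertexSet_of_reachable hb (hloop b))
  exact (h c hc b (reachable_componentEdges hcb hb)).1

end EdgeGraph

section EdgeVectors

variable {Vt E : Type*} [DecidableEq Vt] {ini fin : E → Vt}

theorem edgeVec_injective (hloop : ∀ a, ini a ≠ fin a)
    (hsimple : Function.Injective fun a => s(ini a, fin a)) :
    Function.Injective (edgeVec ini fin) := by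
  intro a b h
  have hfin := congrFun h (fin a)
  have hini := congrFun h (ini a)
  simp only [edgeVec, Pi.sub_apply, Pi.single_apply, if_neg (hloop a),
    if_neg (hloop a).symm, if_true] at hfin hini
  refine hsimple (Sym2.eq_iff.mpr (.inl ⟨?_, ?_⟩)) <;> by_contra hne
  · rw [if_neg hne] at hini
    split_ifs at hini <;> norm_num at hini
  · rw [if_neg hne] at hfin
    split_ifs at hfin <;> norm_num at hfin

theorem single_sub_single_mem_span_of_reachable {A : Set E} {v w : Vt}
    (h : (graphSub ini fin A).Reachable v w) :
    Pi.single w (1 : ℝ) - Pi.single v 1 ∈ Submodule.span ℝ (edgeVec ini fin '' A) := by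
  rw [SimpleGraph.reachable_iff_reflTransGen] at h
  induction h with
  | refl => simp
  | @tail u u' _ hadj ih =>
    rw [← sub_add_sub_cancel _ (Pi.single u 1)]
    refine add_mem ?_ ih
    obtain ⟨-, a, ha, hs⟩ := hadj
    have hx : edgeVec ini fin a ∈ Submodule.span ℝ (edgeVec ini fin '' A) :=
      Submodule.subset_span ⟨a, ha, rfl⟩
    rcases Sym2.eq_iff.mp hs with ⟨rfl, rfl⟩ | ⟨rfl, rfl⟩
    · exact hx
    · simpa [edgeVec] using neg_mem hx

theorem reachable_of_edgeVec_mem_span [Fintype Vt] {A : Set E} {b : E}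
    (hb : edgeVec ini fin b ∈ Submodule.span ℝ (edgeVec ini fin '' A)) :
    (graphSub ini fin A).Reachable (ini b) (fin b) := by
  classical
  let s : Finset Vt := {v | (graphSub ini fin A).Reachable (ini b) v}
  let φ : (Vt → ℝ) →ₗ[ℝ] ℝ := ∑ v ∈ s, LinearMap.proj v
  have hφ (a : E) :
      φ (edgeVec ini fin a) = (if fin a ∈ s then 1 else 0) - if ini a ∈ s then 1 else 0 := by
    simp [φ, edgeVec, Finset.sum_pi_single']
  have hker : Submodule.span ℝ (edgeVec ini fin '' A) ≤ LinearMap.ker φ := by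
    rw [Submodule.span_le]
    rintro _ ⟨a, ha, rfl⟩
    have hs : ini a ∈ s ↔ fin a ∈ s := by
      simpa [s] using ⟨fun h => h.trans (reachable_ini_fin_of_mem ha),
        fun h => h.trans (reachable_ini_fin_of_mem ha).symm⟩
    simp [hφ, hs]
  have h0 : φ (edgeVec ini fin b) = 0 := hker hb
  have hini : ini b ∈ s := by simp [s]
  simpa [hφ, hini, s, sub_eq_zero] using h0

theorem isAComplete_iff_containsReachableEdges [Fintype Vt] (hloop : ∀ a, ini a ≠ fin a)
    (hsimple : Function.Injective fun a => s(ini a, fin a)) (A : Set E) :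
    IsAComplete ini fin A ↔ ContainsReachableEdges ini fin A := by
  refine ⟨fun h b hb => ?_, fun h => ?_⟩
  · have hmem : edgeVec ini fin b ∈ edgeVec ini fin '' A :=
      h ▸ ⟨single_sub_single_mem_span_of_reachable hb, b, rfl⟩
    exact (edgeVec_injective hloop hsimple).mem_set_image.mp hmem
  · refine subset_antisymm ?_ fun _ ⟨a, ha, hx⟩ =>
      ⟨hx ▸ Submodule.subset_span ⟨a, ha, rfl⟩, a, hx⟩
    rintro _ ⟨hspan, b, rfl⟩
    exact ⟨b, h b (reachable_of_edgeVec_mem_span hspan), rfl⟩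

end EdgeVectors

theorem stmt_10_general {Vt E : Type*} [Fintype Vt] [DecidableEq Vt]
    (ini fin : E → Vt) (hloop : ∀ a, ini a ≠ fin a)
    (hsimple : Function.Injective fun a => s(ini a, fin a)) :
    (∀ A : Set E, EdgeConnected ini fin A →
      (IsAComplete ini fin A ↔
        ∀ a : E, ini a ∈ vertexSet ini fin A → fin a ∈ vertexSet ini fin A → a ∈ A)) ∧
    (∀ A : Set E, IsAComplete ini fin A ↔
      ∀ a ∈ A, IsAComplete ini fin
        {b ∈ A | (graphSub ini fin A).Reachable (ini a) (ini b)}) := by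
  simp only [isAComplete_iff_containsReachableEdges hloop hsimple]
  refine ⟨fun A hA => hA.containsReachableEdges_iff hloop, fun A => ⟨?_, ?_⟩⟩
  · exact fun h a _ => h.componentEdges hloop (ini a)
  · exact containsReachableEdges_of_componentEdges hloop

/-- a connected subgraph of `Γ` is A-complete iff it is complete
(contains every edge of `Γ` both of whose endpoints are among its vertices);
an arbitrary subgraph is A-complete iff each of its connected components is. -/
theorem stmt_10 {Vt E : Type*} [Fintype Vt] [DecidableEq Vt] [Fintype E]
    (ini fin : E → Vt) (hloop : ∀ a, ini a ≠ fin a)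
    (hsimple : Function.Injective fun a => s(ini a, fin a)) :
    (∀ A : Set E, EdgeConnected ini fin A →
      (IsAComplete ini fin A ↔
        ∀ a : E, ini a ∈ vertexSet ini fin A → fin a ∈ vertexSet ini fin A → a ∈ A)) ∧
    (∀ A : Set E, IsAComplete ini fin A ↔
      ∀ a ∈ A, IsAComplete ini fin
        {b ∈ A | (graphSub ini fin A).Reachable (ini a) (ini b)}) :=
  stmt_10_general ini fin hloop hsimple
end

section
/- A finite connected oriented graph Γ (with at least one edge) is irreducible — i.e., the complete set Δ_Γ admits no decomposition — if and only if Γ is not a wedge of two smaller graphs; that is, if and only if there is no partition of the edge set L = L₁ ⊔ L₂ into two nonempty parts such that the subgraphs generated by L₁ and by L₂ share exactly one vertex. -/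
/-- The underlying simple graph of an oriented graph. -/
def graphOf {Vt E : Type*} (ini fin : E → Vt) : SimpleGraph Vt where
  Adj v w := v ≠ w ∧ ∃ a : E, s(ini a, fin a) = s(v, w)
  symm := ⟨by
    rintro v w ⟨h, a, ha⟩
    exact ⟨h.symm, a, ha.trans (Sym2.eq_swap)⟩⟩
  loopless := ⟨fun v h => h.1 rfl⟩

/-! The span of a set of edges consists of functions supported on its vertices with zero sum,
so the spans of two edge sets sharing at most one vertex meet only in `0`: a wedge gives a
decomposition. Conversely, let `L = L₁ ⊔ L₂` with independent spans. By connectedness of `Γ` the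
two sides share a vertex. If both sides are connected, two shared vertices `u ≠ v` would put
`e_v - e_u` in both spans. Otherwise a side splits into two parts with no common vertex; moving
one of them to the other side keeps the spans independent (by modularity of the submodule
lattice) and strictly shrinks the set of shared vertices, so one concludes by induction. -/

section VertexSets

variable {Vt E : Type*} (ini fin : E → Vt)

def sharedVertices (A : Set E) : Set Vt :=
  vertexSet ini fin A ∩ vertexSet ini fin Aᶜ

variable {ini fin}

lemma mem_vertexSet_of_mem_sym2 {A : Set E} {a : E} (ha : a ∈ A) {x : Vt}
    (hx : x ∈ s(ini a, fin a)) : x ∈ vertexSet ini fin A :=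
  ⟨a, ha, Sym2.mem_iff.1 hx⟩

lemma vertexSet_mono {A B : Set E} (h : A ⊆ B) : vertexSet ini fin A ⊆ vertexSet ini fin B := by
  rintro v ⟨a, ha, hv⟩
  exact ⟨a, h ha, hv⟩

lemma vertexSet_union (A B : Set E) :
    vertexSet ini fin (A ∪ B) = vertexSet ini fin A ∪ vertexSet ini fin B := by
  ext v
  simp only [vertexSet, Set.mem_union, Set.mem_ofPred_eq, or_and_right, exists_or]

lemma sharedVertices_compl (A : Set E) : sharedVertices ini fin Aᶜ = sharedVertices ini fin A := by
  rw [sharedVertices, compl_compl, Set.inter_comm, sharedVertices]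

lemma sharedVertices_nonempty (hconn : (graphOf ini fin).Connected) {A : Set E}
    (hA : A.Nonempty) (hAc : Aᶜ.Nonempty) : (sharedVertices ini fin A).Nonempty := by
  by_contra hempty
  obtain ⟨a, ha⟩ := hA
  obtain ⟨b, hb⟩ := hAc
  have hb' : ini b ∉ vertexSet ini fin A := fun h =>
    hempty ⟨ini b, h, mem_vertexSet_of_mem_sym2 hb (Sym2.mem_mk_left _ _)⟩
  obtain ⟨d, -, hd₁, hd₂⟩ := (hconn.preconnected (ini a) (ini b)).some.exists_boundary_dart _
    (mem_vertexSet_of_mem_sym2 ha (Sym2.mem_mk_left _ _)) hb'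
  obtain ⟨-, c, hc⟩ := d.adj
  by_cases hcA : c ∈ A
  · exact hd₂ (mem_vertexSet_of_mem_sym2 hcA (hc ▸ Sym2.mem_mk_right _ _))
  · exact hempty ⟨_, hd₁, mem_vertexSet_of_mem_sym2 hcA (hc ▸ Sym2.mem_mk_left _ _)⟩

variable (ini fin) in
def IsVertexSplit (M A : Set E) : Prop :=
  A ⊆ M ∧ A.Nonempty ∧ (M \ A).Nonempty ∧
    Disjoint (vertexSet ini fin A) (vertexSet ini fin (M \ A))

lemma IsVertexSplit.compl_eq {M A : Set E} (hsplit : IsVertexSplit ini fin M A) :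
    Aᶜ = (M \ A) ∪ Mᶜ := by
  ext a
  have := @hsplit.1 a
  simp only [Set.mem_compl_iff, Set.mem_union, Set.mem_sdiff]
  tauto

lemma IsVertexSplit.sharedVertices_ssubset {M A : Set E} (hconn : (graphOf ini fin).Connected)
    (hsplit : IsVertexSplit ini fin M A) :
    sharedVertices ini fin A ⊂ sharedVertices ini fin M := by
  have hAc := hsplit.compl_eq
  obtain ⟨hAM, hA, hMA, hdisj⟩ := hsplit
  rw [Set.ssubset_iff_of_subset]
  · have hcompl : (M \ A)ᶜ = A ∪ Mᶜ := by
      rw [Set.compl_sdiff, Set.union_comm]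
    obtain ⟨x, hxMA, hxc⟩ :=
      sharedVertices_nonempty hconn hMA (hcompl ▸ hA.mono Set.subset_union_left)
    rw [hcompl, vertexSet_union] at hxc
    have hxA : x ∉ vertexSet ini fin A := Set.disjoint_right.1 hdisj hxMA
    exact ⟨x, ⟨vertexSet_mono Set.sdiff_subset hxMA, hxc.resolve_left hxA⟩, fun h => hxA h.1⟩
  · rintro x ⟨hxA, hxc⟩
    rw [hAc, vertexSet_union] at hxc
    exact ⟨vertexSet_mono hAM hxA, hxc.resolve_left (Set.disjoint_left.1 hdisj hxA)⟩

end VertexSets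

section EdgeSpans

variable {Vt E : Type*} [DecidableEq Vt] (ini fin : E → Vt)

def vertexDiff (u v : Vt) : Vt → ℝ :=
  Pi.single v 1 - Pi.single u 1

def edgeSpan (A : Set E) : Submodule ℝ (Vt → ℝ) :=
  Submodule.span ℝ (edgeVec ini fin '' A)

variable {ini fin}

lemma edgeVec_eq_vertexDiff (a : E) : edgeVec ini fin a = vertexDiff (ini a) (fin a) := rfl

lemma vertexDiff_add (u v w : Vt) : vertexDiff u v + vertexDiff v w = vertexDiff u w := by
  simp only [vertexDiff]
  abel

lemma neg_vertexDiff (u v : Vt) : -vertexDiff u v = vertexDiff v u := by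
  simp only [vertexDiff, neg_sub]

lemma vertexDiff_ne_zero {u v : Vt} (h : u ≠ v) : vertexDiff u v ≠ 0 := fun h0 => by
  simpa [vertexDiff, Pi.single_apply, h.symm] using congrFun h0 v

lemma edgeSpan_union (A B : Set E) :
    edgeSpan ini fin (A ∪ B) = edgeSpan ini fin A ⊔ edgeSpan ini fin B := by
  rw [edgeSpan, Set.image_union, Submodule.span_union, edgeSpan, edgeSpan]

lemma vertexDiff_ini_mem_edgeSpan {A : Set E} {a : E} (ha : a ∈ A) {x : Vt}
    (hx : x = ini a ∨ x = fin a) : vertexDiff (ini a) x ∈ edgeSpan ini fin A := by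
  rcases hx with rfl | rfl
  · simp [vertexDiff]
  · rw [← edgeVec_eq_vertexDiff]
    exact Submodule.subset_span ⟨a, ha, rfl⟩

lemma apply_eq_zero_of_mem_edgeSpan {A : Set E} {f : Vt → ℝ} (hf : f ∈ edgeSpan ini fin A)
    {w : Vt} (hw : w ∉ vertexSet ini fin A) : f w = 0 := by
  induction hf using Submodule.span_induction with
  | mem _ h =>
    obtain ⟨a, ha, rfl⟩ := h
    have h₁ : w ≠ ini a := fun h => hw ⟨a, ha, Or.inl h⟩
    have h₂ : w ≠ fin a := fun h => hw ⟨a, ha, Or.inr h⟩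
    simp [edgeVec, h₁, h₂]
  | zero => rfl
  | add _ _ _ _ hf hg => simp [hf, hg]
  | smul _ _ _ hf => simp [hf]

lemma sum_eq_zero_of_mem_edgeSpan [Fintype Vt] {A : Set E} {f : Vt → ℝ}
    (hf : f ∈ edgeSpan ini fin A) : ∑ w, f w = 0 := by
  induction hf using Submodule.span_induction with
  | mem _ h =>
    obtain ⟨a, -, rfl⟩ := h
    simp [edgeVec, Finset.sum_sub_distrib]
  | zero => simp
  | add _ _ _ _ hf hg => simp [Finset.sum_add_distrib, hf, hg]
  | smul _ _ _ hf => simp [← Finset.mul_sum, hf]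

lemma disjoint_edgeSpan_of_subsingleton [Fintype Vt] {A B : Set E}
    (h : (vertexSet ini fin A ∩ vertexSet ini fin B).Subsingleton) :
    Disjoint (edgeSpan ini fin A) (edgeSpan ini fin B) := by
  rw [Submodule.disjoint_def]
  intro f hA hB
  by_contra hf
  obtain ⟨w, hw⟩ := Function.ne_iff.1 hf
  have hsupp : ∀ x, f x ≠ 0 → x ∈ vertexSet ini fin A ∩ vertexSet ini fin B := fun x hx =>
    ⟨not_imp_comm.1 (apply_eq_zero_of_mem_edgeSpan hA) hx,
      not_imp_comm.1 (apply_eq_zero_of_mem_edgeSpan hB) hx⟩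
  have hsum : ∑ x, f x = f w := Finset.sum_eq_single w
    (fun x _ hxw => by_contra fun hx => hxw (h (hsupp x hx) (hsupp w hw)))
    (fun h => absurd (Finset.mem_univ w) h)
  exact hw (hsum ▸ sum_eq_zero_of_mem_edgeSpan hA)

end EdgeSpans

section Wedges

variable {Vt E : Type*} [DecidableEq Vt] {ini fin : E → Vt}

/-- The edges `a` of `M` with `vertexDiff u (ini a) ∈ edgeSpan M` have no vertex in common with
the other edges of `M`, so they are all of `M`. -/
lemma vertexDiff_mem_edgeSpan_of_forall_not_isVertexSplit {M : Set E}
    (hM : ∀ A, ¬ IsVertexSplit ini fin M A) {u v : Vt}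
    (hu : u ∈ vertexSet ini fin M) (hv : v ∈ vertexSet ini fin M) :
    vertexDiff u v ∈ edgeSpan ini fin M := by
  set A := {a ∈ M | vertexDiff u (ini a) ∈ edgeSpan ini fin M}
  have hlink : ∀ a ∈ A, ∀ x, x = ini a ∨ x = fin a → vertexDiff u x ∈ edgeSpan ini fin M :=
    fun a ha x hx => vertexDiff_add u (ini a) x ▸ add_mem ha.2 (vertexDiff_ini_mem_edgeSpan ha.1 hx)
  have hAM : M ⊆ A := by
    by_contra hMA
    obtain ⟨a₀, ha₀, hu₀⟩ := hu
    refine hM A ⟨Set.sep_subset _ _, ⟨a₀, ha₀, ?_⟩, Set.sdiff_nonempty.2 hMA, ?_⟩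
    · rw [← neg_vertexDiff]
      exact neg_mem (vertexDiff_ini_mem_edgeSpan ha₀ hu₀)
    · rw [Set.disjoint_left]
      rintro x ⟨a, ha, hxa⟩ ⟨b, hb, hxb⟩
      refine hb.2 ⟨hb.1, ?_⟩
      rw [← vertexDiff_add u x, ← neg_vertexDiff (ini b) x]
      exact add_mem (hlink a ha x hxa) (neg_mem (vertexDiff_ini_mem_edgeSpan hb.1 hxb))
  obtain ⟨b, hb, hvb⟩ := hv
  exact hlink b (hAM hb) v hvb

lemma IsVertexSplit.disjoint_edgeSpan [Fintype Vt] {M A : Set E}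
    (hsplit : IsVertexSplit ini fin M A)
    (hM : Disjoint (edgeSpan ini fin M) (edgeSpan ini fin Mᶜ)) :
    Disjoint (edgeSpan ini fin A) (edgeSpan ini fin Aᶜ) := by
  rw [hsplit.compl_eq, edgeSpan_union]
  refine Disjoint.disjoint_sup_right_of_disjoint_sup_left
    (disjoint_edgeSpan_of_subsingleton (hsplit.2.2.2.inter_eq ▸ Set.subsingleton_empty)) ?_
  rwa [← edgeSpan_union, Set.union_sdiff_cancel hsplit.1]

lemma exists_wedge_of_disjoint_edgeSpan [Fintype Vt] (hconn : (graphOf ini fin).Connected)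
    {L : Set E} (hL : L.Nonempty) (hLc : Lᶜ.Nonempty)
    (hdisj : Disjoint (edgeSpan ini fin L) (edgeSpan ini fin Lᶜ)) :
    ∃ L' : Set E, L'.Nonempty ∧ L'ᶜ.Nonempty ∧ ∃ v, sharedVertices ini fin L' = {v} := by
  induction hn : (sharedVertices ini fin L).ncard using Nat.strong_induction_on
    generalizing L with
  | _ n ih =>
    have descend : ∀ M A, IsVertexSplit ini fin M A →
        Disjoint (edgeSpan ini fin M) (edgeSpan ini fin Mᶜ) →
        sharedVertices ini fin M = sharedVertices ini fin L →
        ∃ L' : Set E, L'.Nonempty ∧ L'ᶜ.Nonempty ∧ ∃ v, sharedVertices ini fin L' = {v} := by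
      intro M A hsplit hM hML
      have hAc : Aᶜ.Nonempty := hsplit.2.2.1.mono (hsplit.compl_eq ▸ Set.subset_union_left)
      exact ih _ (hn ▸ hML ▸ Set.ncard_lt_ncard (hsplit.sharedVertices_ssubset hconn)) hsplit.2.1
        hAc (hsplit.disjoint_edgeSpan hM) rfl
    rcases (sharedVertices_nonempty hconn hL hLc).exists_eq_singleton_or_nontrivial with
      hone | ⟨u, ⟨huL, huLc⟩, v, ⟨hvL, hvLc⟩, huv⟩
    · exact ⟨L, hL, hLc, hone⟩
    by_cases hsplit : ∃ A, IsVertexSplit ini fin L A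
    · obtain ⟨A, hA⟩ := hsplit
      exact descend L A hA hdisj rfl
    by_cases hsplit' : ∃ A, IsVertexSplit ini fin Lᶜ A
    · obtain ⟨A, hA⟩ := hsplit'
      exact descend Lᶜ A hA (by rwa [compl_compl, disjoint_comm]) (sharedVertices_compl L)
    push Not at hsplit hsplit'
    exact absurd (Submodule.disjoint_def.1 hdisj _
      (vertexDiff_mem_edgeSpan_of_forall_not_isVertexSplit hsplit huL hvL)
      (vertexDiff_mem_edgeSpan_of_forall_not_isVertexSplit hsplit' huLc hvLc))
      (vertexDiff_ne_zero huv)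

end Wedges

section Decompositions

variable {Vt E : Type*} [DecidableEq Vt] {ini fin : E → Vt}

lemma edgeVec_ne_zero (hloop : ∀ a, ini a ≠ fin a) (a : E) : edgeVec ini fin a ≠ 0 := by
  rw [edgeVec_eq_vertexDiff]
  exact vertexDiff_ne_zero (hloop a)

lemma isDecomposition_image_of_wedge [Fintype Vt] (hloop : ∀ a, ini a ≠ fin a)
    {L₁ L₂ : Set E} (h₁ : L₁.Nonempty) (h₂ : L₂.Nonempty) (hU : L₁ ∪ L₂ = Set.univ) {v : Vt}
    (hv : vertexSet ini fin L₁ ∩ vertexSet ini fin L₂ = {v}) :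
    IsDecomposition (Set.range (edgeVec ini fin)) (edgeVec ini fin '' L₁)
      (edgeVec ini fin '' L₂) := by
  have hspan : Disjoint (edgeSpan ini fin L₁) (edgeSpan ini fin L₂) :=
    disjoint_edgeSpan_of_subsingleton (hv ▸ Set.subsingleton_singleton)
  have hrange : edgeVec ini fin '' L₁ ∪ edgeVec ini fin '' L₂ = Set.range (edgeVec ini fin) := by
    rw [← Set.image_union, hU, Set.image_univ]
  refine ⟨h₁.image _, h₂.image _, ?_, hrange, hspan.eq_bot, by rw [← hrange, Submodule.span_union]⟩
  rw [Set.disjoint_left]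
  intro x hx₁ hx₂
  have hx : x = 0 :=
    Submodule.disjoint_def.1 hspan x (Submodule.subset_span hx₁) (Submodule.subset_span hx₂)
  obtain ⟨a, -, rfl⟩ := hx₁
  exact edgeVec_ne_zero hloop a hx

lemma exists_disjoint_edgeSpan_of_isDecomposition {S₁ S₂ : Set (Vt → ℝ)}
    (h : IsDecomposition (Set.range (edgeVec ini fin)) S₁ S₂) :
    ∃ L : Set E, L.Nonempty ∧ Lᶜ.Nonempty ∧
      Disjoint (edgeSpan ini fin L) (edgeSpan ini fin Lᶜ) := by
  obtain ⟨hS₁, hS₂, hdisj, hU, hbot, -⟩ := h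
  have hsub₁ : S₁ ⊆ Set.range (edgeVec ini fin) := hU ▸ Set.subset_union_left
  have hsub₂ : S₂ ⊆ Set.range (edgeVec ini fin) := hU ▸ Set.subset_union_right
  have hcompl : (edgeVec ini fin ⁻¹' S₁)ᶜ = edgeVec ini fin ⁻¹' S₂ := by
    rw [← Set.preimage_compl]
    refine Set.ext fun a => ⟨fun ha => ?_, fun ha => Set.disjoint_right.1 hdisj ha⟩
    obtain h | h := (hU.symm ▸ Set.mem_range_self a : edgeVec ini fin a ∈ S₁ ∪ S₂)
    exacts [absurd h ha, h]
  refine ⟨edgeVec ini fin ⁻¹' S₁, ?_, hcompl ▸ ?_, ?_⟩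
  · exact (Set.image_preimage_eq_of_subset hsub₁).symm ▸ hS₁ |>.of_image
  · exact (Set.image_preimage_eq_of_subset hsub₂).symm ▸ hS₂ |>.of_image
  · rw [hcompl, edgeSpan, edgeSpan, Set.image_preimage_eq_of_subset hsub₁,
      Set.image_preimage_eq_of_subset hsub₂]
    exact disjoint_iff.2 hbot

end Decompositions

theorem stmt_13_general {Vt E : Type*} [Fintype Vt] [DecidableEq Vt]
    [Nonempty E]
    (ini fin : E → Vt) (hloop : ∀ a, ini a ≠ fin a)
    (hconn : (graphOf ini fin).Connected) :
    IsIrred (Set.range (edgeVec ini fin)) (Set.range (edgeVec ini fin)) ↔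
      ¬ ∃ L₁ L₂ : Set E, L₁.Nonempty ∧ L₂.Nonempty ∧ Disjoint L₁ L₂ ∧
        L₁ ∪ L₂ = Set.univ ∧
        ∃ v : Vt, vertexSet ini fin L₁ ∩ vertexSet ini fin L₂ = {v} := by
  constructor
  · rintro ⟨-, -, hirred⟩ ⟨L₁, L₂, h₁, h₂, -, hU, v, hv⟩
    exact hirred _ _ (isDecomposition_image_of_wedge hloop h₁ h₂ hU hv)
  · refine fun hwedge => ⟨Set.inter_eq_left.2 Submodule.subset_span, Set.range_nonempty _,
      fun S₁ S₂ hS => hwedge ?_⟩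
    obtain ⟨L, hL, hLc, hdisj⟩ := exists_disjoint_edgeSpan_of_isDecomposition hS
    obtain ⟨L', h₁, h₂, v, hv⟩ := exists_wedge_of_disjoint_edgeSpan hconn hL hLc hdisj
    exact ⟨L', L'ᶜ, h₁, h₂, disjoint_compl_right, Set.union_compl_self L', v, hv⟩

/-- a finite connected oriented graph with at least one edge is
irreducible (the complete set `Δ_Γ` admits no decomposition) iff it is not a
wedge: there is no partition `L = L₁ ⊔ L₂` into nonempty parts such that the
subgraphs generated by `L₁` and `L₂` share exactly one vertex. -/
theorem stmt_13 {Vt E : Type*} [Fintype Vt] [DecidableEq Vt] [Fintype E]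
    [Nonempty E]
    (ini fin : E → Vt) (hloop : ∀ a, ini a ≠ fin a)
    (hsimple : Function.Injective fun a => s(ini a, fin a))
    (hconn : (graphOf ini fin).Connected) :
    IsIrred (Set.range (edgeVec ini fin)) (Set.range (edgeVec ini fin)) ↔
      ¬ ∃ L₁ L₂ : Set E, L₁.Nonempty ∧ L₂.Nonempty ∧ Disjoint L₁ L₂ ∧
        L₁ ∪ L₂ = Set.univ ∧
        ∃ v : Vt, vertexSet ini fin L₁ ∩ vertexSet ini fin L₂ = {v} :=
  stmt_13_general ini fin hloop hconn
end

section
/- For the root arrangement of type A_n, Δ = {e_i − e_j : 1 ≤ i < j ≤ n+1} in the hyperplane of ℝ^{n+1} where the coordinates sum to zero: a subset S ⊆ Δ is irreducible if and only if S = {e_i − e_j : i, j ∈ T, i < j} for some subset T ⊆ {1, …, n+1} with |T| ≥ 2. Moreover, under this correspondence a family of irreducible subsets, corresponding to subsets T₁, …, T_k ⊆ {1, …, n+1} each with at least 2 elements, is nested if and only if for all i, j either T_i ∩ T_j = ∅ or one of T_i, T_j is contained in the other. -/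
/-- The set `{e_i - e_j : i, j ∈ T, i < j}` of roots with both indices in `T`. -/
def rootsOf {n : ℕ} (T : Set (Fin (n + 1))) : Set (Fin (n + 1) → ℝ) :=
  {v | ∃ i ∈ T, ∃ j ∈ T, i < j ∧ v = Pi.single i 1 - Pi.single j 1}

namespace Stmt14
open Submodule

variable {n : ℕ}

noncomputable abbrev ee (i : Fin (n + 1)) : Fin (n + 1) → ℝ := Pi.single i 1

lemma root_apply (i j k : Fin (n + 1)) :
    (ee i - ee j) k = (if k = i then (1:ℝ) else 0) - (if k = j then 1 else 0) := by
  simp [ee, Pi.single_apply]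

lemma root_ne_zero {i j : Fin (n + 1)} (h : i ≠ j) : ee i - ee j ≠ 0 := by
  intro hc
  have := congrFun hc i
  rw [root_apply] at this
  simp [h] at this

lemma root_eq_iff {i j i' j' : Fin (n + 1)} (hij : i ≠ j) (hij' : i' ≠ j') :
    ee (n := n) i - ee j = ee i' - ee j' ↔ i = i' ∧ j = j' := by
  constructor
  · intro h
    have h1 := congrFun h i
    have h2 := congrFun h j
    rw [root_apply, root_apply] at h1 h2
    simp only [if_pos rfl, if_neg hij, if_neg (Ne.symm hij)] at h1 h2
    constructor
    · by_contra hii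
      rw [if_neg hii] at h1
      split_ifs at h1 <;> norm_num at h1
    · by_contra hjj
      rw [if_neg hjj] at h2
      split_ifs at h2 <;> norm_num at h2
  · rintro ⟨rfl, rfl⟩; rfl

end Stmt14

namespace Stmt14
open Submodule
variable {n : ℕ}

/-- functions vanishing outside `T` -/
def zsub (T : Set (Fin (n + 1))) : Submodule ℝ (Fin (n + 1) → ℝ) where
  carrier := {v | ∀ i ∉ T, v i = 0}
  add_mem' := fun ha hb i hi => by simp [ha i hi, hb i hi]
  zero_mem' := fun i _ => rfl
  smul_mem' := fun c v hv i hi => by simp [hv i hi]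

lemma mem_zsub {T : Set (Fin (n+1))} {v : Fin (n+1) → ℝ} :
    v ∈ zsub T ↔ ∀ i ∉ T, v i = 0 := Iff.rfl

lemma zsub_mono {T T' : Set (Fin (n+1))} (h : T ⊆ T') : zsub T ≤ zsub T' :=
  fun v hv i hi => hv i (fun hh => hi (h hh))

lemma root_mem_zsub {T : Set (Fin (n+1))} {i j : Fin (n+1)} (hi : i ∈ T) (hj : j ∈ T) :
    ee i - ee j ∈ zsub T := by
  intro k hk
  rw [root_apply, if_neg, if_neg, sub_zero]
  · rintro rfl; exact hk hj
  · rintro rfl; exact hk hi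

lemma mem_rootsOf {T : Set (Fin (n+1))} {v : Fin (n+1) → ℝ} :
    v ∈ rootsOf T ↔ ∃ i ∈ T, ∃ j ∈ T, i < j ∧ v = ee i - ee j := Iff.rfl

lemma rootsOf_mono {T T' : Set (Fin (n+1))} (h : T ⊆ T') : rootsOf T ⊆ rootsOf T' := by
  rintro v ⟨i, hi, j, hj, hlt, rfl⟩
  exact ⟨i, h hi, j, h hj, hlt, rfl⟩

lemma span_rootsOf_le_zsub (T : Set (Fin (n+1))) :
    span ℝ (rootsOf T) ≤ zsub T := by
  rw [span_le]
  rintro v ⟨i, hi, j, hj, _, rfl⟩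
  exact root_mem_zsub hi hj

lemma endpoints_mem_of_mem_zsub {T : Set (Fin (n+1))} {i j : Fin (n+1)} (hij : i ≠ j)
    (h : ee i - ee j ∈ zsub T) : i ∈ T ∧ j ∈ T := by
  constructor
  · by_contra hi
    have := h i hi
    rw [root_apply, if_pos rfl, if_neg hij] at this
    norm_num at this
  · by_contra hj
    have := h j hj
    rw [root_apply, if_pos rfl, if_neg (Ne.symm hij)] at this
    norm_num at this

/-- `e_i - e_j ∈ span (rootsOf T)` for any `i j ∈ T`. -/
lemma sub_mem_span_rootsOf {T : Set (Fin (n+1))} {i j : Fin (n+1)} (hi : i ∈ T) (hj : j ∈ T) :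
    ee i - ee j ∈ span ℝ (rootsOf T) := by
  rcases lt_trichotomy i j with h | rfl | h
  · exact subset_span ⟨i, hi, j, hj, h, rfl⟩
  · simp
  · have : ee (n := n) i - ee j = -(ee j - ee i) := by ring
    rw [this]
    exact neg_mem (subset_span ⟨j, hj, i, hi, h, rfl⟩)

attribute [local instance] Classical.propDecidable

/-- the "sum of coordinates over `T`" functional -/
noncomputable def sumOn (T : Set (Fin (n + 1))) : (Fin (n + 1) → ℝ) →ₗ[ℝ] ℝ where
  toFun v := ∑ i, if i ∈ T then v i else 0
  map_add' a b := by
    rw [← Finset.sum_add_distrib]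
    exact Finset.sum_congr rfl fun i _ => by by_cases h : i ∈ T <;> simp [h]
  map_smul' c v := by
    show (∑ i, if i ∈ T then (c • v) i else 0) = (RingHom.id ℝ) c • ∑ i, if i ∈ T then v i else 0
    rw [RingHom.id_apply, smul_eq_mul, Finset.mul_sum]
    exact Finset.sum_congr rfl fun i _ => by by_cases h : i ∈ T <;> simp [h]

lemma sumOn_single (T : Set (Fin (n+1))) (i : Fin (n+1)) :
    sumOn T (ee i) = if i ∈ T then 1 else 0 := by
  show (∑ k, if k ∈ T then (ee i) k else 0) = _
  rw [Finset.sum_eq_single i]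
  · simp [ee]
  · intro k _ hk
    by_cases h : k ∈ T <;> simp [h, ee, Pi.single_apply, hk]
  · simp

lemma sumOn_root (T : Set (Fin (n+1))) (i j : Fin (n+1)) :
    sumOn T (ee i - ee j) = (if i ∈ T then 1 else 0) - (if j ∈ T then 1 else 0) := by
  rw [map_sub, sumOn_single, sumOn_single]

lemma sumOn_root_eq_zero {T : Set (Fin (n+1))} {i j : Fin (n+1)} (h : i ∈ T ↔ j ∈ T) :
    sumOn T (ee i - ee j) = 0 := by
  rw [sumOn_root]
  by_cases hi : i ∈ T
  · rw [if_pos hi, if_pos (h.mp hi), sub_self]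
  · rw [if_neg hi, if_neg (fun hj => hi (h.mpr hj)), sub_self]

lemma iff_of_sumOn_root_eq_zero {T : Set (Fin (n+1))} {i j : Fin (n+1)}
    (h : sumOn T (ee i - ee j) = 0) : i ∈ T ↔ j ∈ T := by
  rw [sumOn_root] at h
  by_cases hi : i ∈ T <;> by_cases hj : j ∈ T <;> simp [hi, hj] at h ⊢

end Stmt14

namespace Stmt14
open Submodule
variable {n : ℕ}

lemma complete_rootsOf (T : Set (Fin (n+1))) :
    (rootsOf (n := n) Set.univ) ∩ (span ℝ (rootsOf T) : Set _) = rootsOf T := by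
  apply Set.Subset.antisymm
  · rintro v ⟨⟨i, _, j, _, hlt, rfl⟩, hsp⟩
    have hz : ee i - ee j ∈ zsub T := span_rootsOf_le_zsub T hsp
    obtain ⟨hi, hj⟩ := endpoints_mem_of_mem_zsub hlt.ne hz
    exact ⟨i, hi, j, hj, hlt, rfl⟩
  · intro v hv
    exact ⟨rootsOf_mono (Set.subset_univ T) hv, subset_span hv⟩

section Irred
variable {S₁ S₂ : Set (Fin (n+1) → ℝ)} {T : Set (Fin (n+1))}

/-- the "step" lemma: for distinct `p q r ∈ T`, membership in `span S₁` propagates. -/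
lemma step2 (hU : S₁ ∪ S₂ = rootsOf T) (hbot : span ℝ S₁ ⊓ span ℝ S₂ = ⊥)
    {p q r : Fin (n+1)} (hp : p ∈ T) (hq : q ∈ T) (hr : r ∈ T)
    (hpq : p ≠ q) (hpr : p ≠ r) (hqr : q ≠ r)
    (h1 : ee p - ee q ∈ span ℝ S₁) : ee p - ee r ∈ span ℝ S₁ := by
  have notboth : ∀ a b : Fin (n+1), a ≠ b →
      ee a - ee b ∈ span ℝ S₁ → ee a - ee b ∈ span ℝ S₂ → False := by
    intro a b hab m1 m2
    have : ee (n := n) a - ee b ∈ (⊥ : Submodule ℝ _) := hbot ▸ mem_inf.mpr ⟨m1, m2⟩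
    exact root_ne_zero hab (mem_bot ℝ |>.mp this)
  have inside : ∀ a b : Fin (n+1), a ∈ T → b ∈ T → a ≠ b →
      ee a - ee b ∈ span ℝ S₁ ∨ ee a - ee b ∈ span ℝ S₂ := by
    intro a b ha hb hab
    rcases lt_or_gt_of_ne hab with h | h
    · have : ee (n := n) a - ee b ∈ S₁ ∪ S₂ := hU ▸ ⟨a, ha, b, hb, h, rfl⟩
      rcases this with h' | h'
      · exact Or.inl (subset_span h')
      · exact Or.inr (subset_span h')
    · have : ee (n := n) b - ee a ∈ S₁ ∪ S₂ := hU ▸ ⟨b, hb, a, ha, h, rfl⟩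
      have hneg : ee (n := n) a - ee b = -(ee b - ee a) := by ring
      rcases this with h' | h'
      · exact Or.inl (hneg ▸ neg_mem (subset_span h'))
      · exact Or.inr (hneg ▸ neg_mem (subset_span h'))
  by_contra hc
  have h2 : ee p - ee r ∈ span ℝ S₂ := (inside p r hp hr hpr).resolve_left hc
  rcases inside q r hq hr hqr with h3 | h3
  · have : ee (n := n) p - ee r = (ee p - ee q) + (ee q - ee r) := by ring
    exact hc (this ▸ add_mem h1 h3)
  · have : ee (n := n) p - ee q = (ee p - ee r) - (ee q - ee r) := by ring
    exact notboth p q hpq h1 (this ▸ sub_mem h2 h3)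

lemma chainP (hU : S₁ ∪ S₂ = rootsOf T) (hbot : span ℝ S₁ ⊓ span ℝ S₂ = ⊥)
    {p q r s : Fin (n+1)} (hp : p ∈ T) (hq : q ∈ T) (hr : r ∈ T) (hs : s ∈ T)
    (hpq : p ≠ q) (hrs : r ≠ s)
    (h1 : ee p - ee q ∈ span ℝ S₁) : ee r - ee s ∈ span ℝ S₁ := by
  have sym : ∀ a b : Fin (n+1), ee a - ee b ∈ span ℝ S₁ → ee b - ee a ∈ span ℝ S₁ := by
    intro a b h
    have : ee (n := n) b - ee a = -(ee a - ee b) := by ring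
    exact this ▸ neg_mem h
  by_cases hrp : r = p
  · subst hrp
    by_cases hsq : s = q
    · subst hsq; exact h1
    · exact step2 hU hbot hr hq hs hpq hrs (Ne.symm hsq) h1
  · by_cases hrq : r = q
    · subst hrq
      have h2 : ee r - ee p ∈ span ℝ S₁ := sym p r h1
      by_cases hsp : s = p
      · subst hsp; exact h2
      · exact step2 hU hbot hr hp hs hrp hrs (Ne.symm hsp) h2
    · have h2 : ee p - ee r ∈ span ℝ S₁ := step2 hU hbot hp hq hr hpq (Ne.symm hrp) (Ne.symm hrq) h1
      have h3 : ee r - ee p ∈ span ℝ S₁ := sym p r h2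
      by_cases hsp : s = p
      · subst hsp; exact h3
      · exact step2 hU hbot hr hp hs hrp hrs (Ne.symm hsp) h3

lemma irred_rootsOf (h2 : 2 ≤ T.ncard) :
    IsIrred (rootsOf (n := n) Set.univ) (rootsOf T) := by
  obtain ⟨a, ha, b, hb, hab⟩ := (Set.one_lt_ncard (Set.toFinite T)).mp (by omega)
  refine ⟨complete_rootsOf T, ?_, ?_⟩
  · rcases lt_or_gt_of_ne hab with h | h
    · exact ⟨_, a, ha, b, hb, h, rfl⟩
    · exact ⟨_, b, hb, a, ha, h, rfl⟩
  · rintro S₁ S₂ ⟨⟨x, hx⟩, ⟨y, hy⟩, hdis, hU, hbot, -⟩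
    obtain ⟨i, hi, j, hj, hij, rfl⟩ : x ∈ rootsOf T := hU ▸ Set.mem_union_left _ hx
    obtain ⟨k, hk, l, hl, hkl, rfl⟩ : y ∈ rootsOf T := hU ▸ Set.mem_union_right _ hy
    have hP : ee i - ee j ∈ span ℝ S₁ := subset_span hx
    have hQ : ee k - ee l ∈ span ℝ S₂ := subset_span hy
    have hPkl : ee k - ee l ∈ span ℝ S₁ :=
      chainP hU hbot hi hj hk hl hij.ne hkl.ne hP
    have : ee (n := n) k - ee l ∈ (⊥ : Submodule ℝ _) := hbot ▸ mem_inf.mpr ⟨hPkl, hQ⟩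
    exact root_ne_zero hkl.ne ((mem_bot ℝ).mp this)

end Irred
end Stmt14

namespace Stmt14
open Submodule Relation
variable {n : ℕ}

section Conn
variable {S : Set (Fin (n+1) → ℝ)}

/-- adjacency relation of `S` -/
def adj (S : Set (Fin (n+1) → ℝ)) (i j : Fin (n+1)) : Prop :=
  ee i - ee j ∈ S ∨ ee j - ee i ∈ S

lemma adj_symm {i j : Fin (n+1)} (h : adj S i j) : adj S j i := h.symm

lemma sub_mem_span_of_reflTransGen {a i : Fin (n+1)} (h : ReflTransGen (adj S) a i) :
    ee a - ee i ∈ span ℝ S := by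
  induction h with
  | refl => simp
  | tail _ hr ih =>
    rename_i k j _
    have hkj : ee (n := n) k - ee j ∈ span ℝ S := by
      rcases hr with h' | h'
      · exact subset_span h'
      · have : ee (n := n) k - ee j = -(ee j - ee k) := by ring
        exact this ▸ neg_mem (subset_span h')
    have : ee (n := n) a - ee j = (ee a - ee k) + (ee k - ee j) := by ring
    exact this ▸ add_mem ih hkj

lemma irred_eq_rootsOf (hS : S ⊆ rootsOf (n := n) Set.univ)
    (h : IsIrred (rootsOf Set.univ) S) :
    ∃ T : Set (Fin (n + 1)), 2 ≤ T.ncard ∧ S = rootsOf T := by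
  obtain ⟨hcomp, ⟨x, hx⟩, hnodec⟩ := h
  obtain ⟨a, -, b, -, hab, rfl⟩ := hS hx
  set C : Set (Fin (n+1)) := {i | ReflTransGen (adj S) a i} with hC
  have haC : a ∈ C := ReflTransGen.refl
  have hbC : b ∈ C := ReflTransGen.single (Or.inl hx)
  -- every element of S with an endpoint in C lies in rootsOf C
  have hclosed : ∀ v ∈ S, v ∈ rootsOf C ∨ v ∈ zsub Cᶜ := by
    intro v hv
    obtain ⟨i, -, j, -, hij, rfl⟩ := hS hv
    by_cases hiC : i ∈ C
    · have hjC : j ∈ C := ReflTransGen.tail hiC (Or.inl hv)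
      exact Or.inl ⟨i, hiC, j, hjC, hij, rfl⟩
    · by_cases hjC : j ∈ C
      · exact absurd (ReflTransGen.tail hjC (Or.inr hv)) hiC
      · exact Or.inr (root_mem_zsub (by simpa using hiC) (by simpa using hjC))
  -- S ⊆ rootsOf C, else we get a decomposition
  have hsub : S ⊆ rootsOf C := by
    by_contra hns
    have hS2 : (S \ rootsOf C).Nonempty := Set.diff_nonempty.mpr hns
    apply hnodec (S ∩ rootsOf C) (S \ rootsOf C)
    refine ⟨⟨_, hx, a, haC, b, hbC, hab, rfl⟩, hS2, ?_, ?_, ?_, ?_⟩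
    · exact Set.disjoint_of_subset_left (Set.inter_subset_right) Set.disjoint_sdiff_right
    · rw [Set.inter_union_diff]
    · rw [eq_bot_iff]
      intro v ⟨hv1, hv2⟩
      have h1 : v ∈ zsub C := (span_le.mpr ?_) hv1
      · have h2 : v ∈ zsub Cᶜ := (span_le.mpr ?_) hv2
        · ext i
          by_cases hi : i ∈ C
          · exact h2 i (by simpa using hi)
          · exact h1 i hi
        · intro w hw
          rcases hclosed w hw.1 with h' | h'
          · exact absurd h' hw.2
          · exact h'
      · intro w hw
        exact span_rootsOf_le_zsub C (subset_span hw.2)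
    · rw [← span_union, Set.inter_union_diff]
  -- converse inclusion via completeness
  have hsup : rootsOf C ⊆ S := by
    rintro v ⟨i, hi, j, hj, hij, rfl⟩
    have hmem : ee i - ee j ∈ span ℝ S := by
      have h1 : ee a - ee i ∈ span ℝ S := sub_mem_span_of_reflTransGen hi
      have h2 : ee a - ee j ∈ span ℝ S := sub_mem_span_of_reflTransGen hj
      have : ee (n := n) i - ee j = (ee a - ee j) - (ee a - ee i) := by ring
      exact this ▸ sub_mem h2 h1
    have : ee i - ee j ∈ rootsOf (n := n) Set.univ ∩ (span ℝ S : Set _) :=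
      ⟨⟨i, trivial, j, trivial, hij, rfl⟩, hmem⟩
    exact hcomp ▸ this
  refine ⟨C, ?_, Set.Subset.antisymm hsub hsup⟩
  rw [show (2:ℕ) = 1 + 1 by rfl]
  exact (Set.one_lt_ncard (Set.toFinite C)).mpr ⟨a, haC, b, hbC, hab.ne⟩

end Conn
end Stmt14

namespace Stmt14
open Submodule
variable {n : ℕ}

lemma endpoints_of_mem_rootsOf {T : Set (Fin (n+1))} {i j : Fin (n+1)} (hij : i ≠ j)
    (h : ee i - ee j ∈ rootsOf T) : i ∈ T ∧ j ∈ T :=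
  endpoints_mem_of_mem_zsub hij (span_rootsOf_le_zsub T (subset_span h))

lemma rootsOf_subset_reflect {T T' : Set (Fin (n+1))} (h2 : 2 ≤ T.ncard)
    (h : rootsOf T ⊆ rootsOf T') : T ⊆ T' := by
  intro i hi
  obtain ⟨b, hb, hbi⟩ := Set.exists_ne_of_one_lt_ncard (s := T) (by omega) i
  rcases lt_or_gt_of_ne hbi with hlt | hlt
  · exact (endpoints_of_mem_rootsOf hbi (h ⟨b, hb, i, hi, hlt, rfl⟩)).2
  · exact (endpoints_of_mem_rootsOf (Ne.symm hbi) (h ⟨i, hi, b, hb, hlt, rfl⟩)).1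

end Stmt14

namespace Stmt14
open Submodule
variable {n : ℕ}

lemma nested_of_pairwise {k : ℕ} (T : Fin k → Set (Fin (n + 1))) (hT : ∀ l, 2 ≤ (T l).ncard)
    (hpair : ∀ l l' : Fin k, T l ∩ T l' = ∅ ∨ T l ⊆ T l' ∨ T l' ⊆ T l) :
    IsNestedFam (rootsOf (n := n) Set.univ) {S | ∃ l, S = rootsOf (T l)} := by
  constructor
  · rintro M ⟨l, rfl⟩
    exact irred_rootsOf (hT l)
  intro 𝒯 hsub hne hinc
  -- distinct members have disjoint vertex sets
  have star : ∀ M ∈ 𝒯, ∀ M' ∈ 𝒯, M ≠ M' → ∀ l l', M = rootsOf (T l) → M' = rootsOf (T l') →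
      T l ∩ T l' = ∅ := by
    intro M hM M' hM' hMM l l' hMl hMl'
    rcases hpair l l' with h | h | h
    · exact h
    · exact absurd (hinc M hM M' hM' (by rw [hMl, hMl']; exact rootsOf_mono h)) hMM
    · exact absurd (hinc M' hM' M hM (by rw [hMl, hMl']; exact rootsOf_mono h))
        (fun he => hMM he.symm)
  set U : Set (Fin (n+1)) := {p | ∃ l, rootsOf (T l) ∈ 𝒯 ∧ p ∈ T l} with hU
  have hzs : span ℝ (⋃₀ 𝒯) ≤ zsub U := by
    rw [span_le]
    rintro w ⟨M, hM, hw⟩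
    obtain ⟨l, rfl⟩ := hsub hM
    obtain ⟨i, hi, j, hj, hij, rfl⟩ := hw
    exact root_mem_zsub ⟨l, hM, hi⟩ ⟨l, hM, hj⟩
  have hker : ∀ l : Fin k, rootsOf (T l) ∈ 𝒯 →
      span ℝ (⋃₀ 𝒯) ≤ LinearMap.ker (sumOn (T l)) := by
    intro l hl
    rw [span_le]
    rintro w ⟨M, hM, hw⟩
    by_cases hMl : M = rootsOf (T l)
    · subst hMl
      obtain ⟨i, hi, j, hj, hij, rfl⟩ := hw
      exact sumOn_root_eq_zero (iff_of_true hi hj)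
    · obtain ⟨l', hMl'⟩ := hsub hM
      have hdisj := star M hM (rootsOf (T l)) hl (fun he => hMl he) l' l hMl' rfl
      subst hMl'
      obtain ⟨i, hi, j, hj, hij, rfl⟩ := hw
      refine sumOn_root_eq_zero (iff_of_false ?_ ?_) <;> intro hmem
      · exact Set.eq_empty_iff_forall_notMem.mp hdisj _ ⟨hi, hmem⟩
      · exact Set.eq_empty_iff_forall_notMem.mp hdisj _ ⟨hj, hmem⟩
  have hcompl : IsCompleteSet (rootsOf (n := n) Set.univ) (⋃₀ 𝒯) := by
    apply Set.Subset.antisymm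
    · rintro v ⟨⟨i, -, j, -, hij, rfl⟩, hsp⟩
      have hiU : i ∈ U := (endpoints_mem_of_mem_zsub hij.ne (hzs hsp)).1
      obtain ⟨l, hl𝒯, hil⟩ := hiU
      have hjl : j ∈ T l := by
        have := hker l hl𝒯 hsp
        rw [LinearMap.mem_ker] at this
        exact (iff_of_sumOn_root_eq_zero this).mp hil
      exact ⟨rootsOf (T l), hl𝒯, ⟨i, hil, j, hjl, hij, rfl⟩⟩
    · rintro v ⟨M, hM, hv⟩
      obtain ⟨l, rfl⟩ := hsub hM
      exact ⟨rootsOf_mono (Set.subset_univ _) hv,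
        span_mono (Set.subset_sUnion_of_mem hM) (subset_span hv)⟩
  refine ⟨hcompl, ?_, ?_, ?_, rfl, ?_, ?_⟩
  · exact Set.Finite.subset (Set.finite_range fun l => rootsOf (T l))
      (fun M hM => by obtain ⟨l, rfl⟩ := hsub hM; exact ⟨l, rfl⟩)
  · rintro M hM
    obtain ⟨l, rfl⟩ := hsub hM
    exact irred_rootsOf (hT l)
  · intro M hM M' hM' hMM
    obtain ⟨l, hMl⟩ := hsub hM
    obtain ⟨l', hMl'⟩ := hsub hM'
    have hdisj := star M hM M' hM' hMM l l' hMl hMl'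
    simp only [Function.onFun, id_eq]
    rw [Set.disjoint_left]
    intro w hw hw'
    rw [hMl] at hw; rw [hMl'] at hw'
    obtain ⟨i, hi, j, hj, hij, rfl⟩ := hw
    obtain ⟨i', hi', j', hj', hij', heq⟩ := hw'
    obtain ⟨rfl, rfl⟩ := (root_eq_iff hij.ne hij'.ne).mp heq
    exact Set.eq_empty_iff_forall_notMem.mp hdisj _ ⟨hi, hi'⟩
  · rw [iSupIndep_def]
    intro M
    obtain ⟨l, hMl⟩ := hsub M.2
    rw [disjoint_def]
    intro v hv1 hv2
    have h1 : v ∈ zsub (T l) := by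
      refine span_le.mpr ?_ hv1
      rw [hMl]
      exact fun w hw => span_rootsOf_le_zsub _ (subset_span hw)
    have h2 : v ∈ zsub (T l)ᶜ := by
      refine iSup_le (fun M' => iSup_le fun hMM' => span_le.mpr ?_) hv2
      obtain ⟨l', hMl'⟩ := hsub M'.2
      have hdisj := star M'.1 M'.2 M.1 M.2 (fun he => hMM' (Subtype.ext he)) l' l hMl' hMl
      rintro w hw
      rw [hMl'] at hw
      obtain ⟨i, hi, j, hj, hij, rfl⟩ := hw
      refine root_mem_zsub ?_ ?_ <;> intro hmem
      · exact Set.eq_empty_iff_forall_notMem.mp hdisj _ ⟨hi, hmem⟩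
      · exact Set.eq_empty_iff_forall_notMem.mp hdisj _ ⟨hj, hmem⟩
    ext i
    by_cases hi : i ∈ T l
    · exact h2 i (by simpa using hi)
    · exact h1 i hi
  · rw [Set.sUnion_eq_iUnion, span_iUnion, iSup_subtype']

end Stmt14

namespace Stmt14
open Submodule
variable {n : ℕ}

lemma pairwise_of_nested {k : ℕ} (T : Fin k → Set (Fin (n + 1))) (hT : ∀ l, 2 ≤ (T l).ncard)
    (hnest : IsNestedFam (rootsOf (n := n) Set.univ) {S | ∃ l, S = rootsOf (T l)}) :
    ∀ l l' : Fin k, T l ∩ T l' = ∅ ∨ T l ⊆ T l' ∨ T l' ⊆ T l := by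
  intro l l'
  by_cases h1 : T l ⊆ T l'
  · exact Or.inr (Or.inl h1)
  by_cases h2 : T l' ⊆ T l
  · exact Or.inr (Or.inr h2)
  left
  have hMne : rootsOf (T l) ≠ rootsOf (T l') := by
    intro he
    exact h1 (rootsOf_subset_reflect (hT l) (he ▸ subset_rfl))
  set 𝒯 : Set (Set (Fin (n+1) → ℝ)) := {rootsOf (T l), rootsOf (T l')} with h𝒯
  have hsub : 𝒯 ⊆ {S | ∃ l, S = rootsOf (T l)} := by
    rintro M (rfl | rfl)
    · exact ⟨l, rfl⟩
    · exact ⟨l', rfl⟩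
  have hinc : ∀ M₁ ∈ 𝒯, ∀ M₂ ∈ 𝒯, M₁ ⊆ M₂ → M₁ = M₂ := by
    rintro M₁ (rfl | rfl) M₂ (rfl | rfl) hss
    · rfl
    · exact absurd (rootsOf_subset_reflect (hT l) hss) h1
    · exact absurd (rootsOf_subset_reflect (hT l') hss) h2
    · rfl
  obtain ⟨hcompl, -⟩ := hnest.2 𝒯 hsub ⟨_, Or.inl rfl⟩ hinc
  rw [Set.eq_empty_iff_forall_notMem]
  rintro i ⟨hil, hil'⟩
  obtain ⟨j, hjl, hjl'⟩ := Set.not_subset.mp h1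
  obtain ⟨j', hj'l', hj'l⟩ := Set.not_subset.mp h2
  have hji : j ≠ i := fun he => hjl' (he ▸ hil')
  have hj'i : j' ≠ i := fun he => hj'l (he ▸ hil)
  have hjj' : j ≠ j' := fun he => hjl' (he ▸ hj'l')
  have hvs : ee j - ee j' ∈ span ℝ (⋃₀ 𝒯) := by
    have e1 : ee (n := n) j - ee i ∈ span ℝ (⋃₀ 𝒯) :=
      span_mono (Set.subset_sUnion_of_mem (Or.inl rfl)) (sub_mem_span_rootsOf hjl hil)
    have e2 : ee (n := n) i - ee j' ∈ span ℝ (⋃₀ 𝒯) :=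
      span_mono (Set.subset_sUnion_of_mem (Or.inr rfl)) (sub_mem_span_rootsOf hil' hj'l')
    have : ee (n := n) j - ee j' = (ee j - ee i) + (ee i - ee j') := by ring
    exact this ▸ add_mem e1 e2
  have hmem : ∀ p q : Fin (n+1), p < q → ee p - ee q ∈ span ℝ (⋃₀ 𝒯) →
      ee p - ee q ∈ ⋃₀ 𝒯 := by
    intro p q hpq hsp
    have : ee p - ee q ∈ rootsOf (n := n) Set.univ ∩ (span ℝ (⋃₀ 𝒯) : Set _) :=
      ⟨⟨p, trivial, q, trivial, hpq, rfl⟩, hsp⟩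
    exact hcompl ▸ this
  have hcontra : ∀ p q : Fin (n+1), p = j ∧ q = j' ∨ p = j' ∧ q = j →
      ee p - ee q ∈ ⋃₀ 𝒯 → False := by
    rintro p q hpq hm
    rcases hm with ⟨M, (rfl | rfl), hmM⟩
    · have hpqne : p ≠ q := by rcases hpq with ⟨rfl, rfl⟩ | ⟨rfl, rfl⟩; exacts [hjj', Ne.symm hjj']
      obtain ⟨hp, hq⟩ := endpoints_of_mem_rootsOf hpqne hmM
      rcases hpq with ⟨rfl, rfl⟩ | ⟨rfl, rfl⟩
      · exact hj'l hq
      · exact hj'l hp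
    · have hpqne : p ≠ q := by rcases hpq with ⟨rfl, rfl⟩ | ⟨rfl, rfl⟩; exacts [hjj', Ne.symm hjj']
      obtain ⟨hp, hq⟩ := endpoints_of_mem_rootsOf hpqne hmM
      rcases hpq with ⟨rfl, rfl⟩ | ⟨rfl, rfl⟩
      · exact hjl' hp
      · exact hjl' hq
  rcases lt_or_gt_of_ne hjj' with hlt | hlt
  · exact hcontra j j' (Or.inl ⟨rfl, rfl⟩) (hmem j j' hlt hvs)
  · have : ee (n := n) j' - ee j = -(ee j - ee j') := by ring
    exact hcontra j' j (Or.inr ⟨rfl, rfl⟩) (hmem j' j hlt (this ▸ neg_mem hvs))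

end Stmt14


/-- for the root arrangement of type `A_n`,
`Δ = {e_i - e_j : i < j}`, a subset `S ⊆ Δ` is irreducible iff
`S = {e_i - e_j : i, j ∈ T, i < j}` for some `T` with at least two elements;
and a family of such irreducible subsets, corresponding to sets `T₁, …, T_k`
each with at least two elements, is nested iff the `T_l` are pairwise disjoint
or comparable under inclusion. -/
theorem stmt_14 (n : ℕ) :
    (∀ S ⊆ rootsOf (n := n) Set.univ,
      (IsIrred (rootsOf Set.univ) S ↔
        ∃ T : Set (Fin (n + 1)), 2 ≤ T.ncard ∧ S = rootsOf T)) ∧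
    (∀ (k : ℕ) (T : Fin k → Set (Fin (n + 1))), (∀ l, 2 ≤ (T l).ncard) →
      (IsNestedFam (rootsOf (n := n) Set.univ) {S | ∃ l, S = rootsOf (T l)} ↔
        ∀ l l' : Fin k, T l ∩ T l' = ∅ ∨ T l ⊆ T l' ∨ T l' ⊆ T l)) := by
  constructor
  · intro S hS
    constructor
    · exact Stmt14.irred_eq_rootsOf hS
    · rintro ⟨T, hT, rfl⟩
      exact Stmt14.irred_rootsOf hT
  · intro k T hT
    exact ⟨Stmt14.pairwise_of_nested T hT, Stmt14.nested_of_pairwise T hT⟩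
end

section
/- For a subset S ⊆ Δ(m,n) the following are equivalent: (1) S is complete (span(S) ∩ Δ(m,n) = S); (2) whenever a triangle is contained in S, the little square containing it is also contained in S; (3) S = ⋃_{i=1}^h A_i × B_i where the sets A_i ⊆ {1,…,m} are pairwise disjoint and the sets B_i ⊆ {1,…,n} are pairwise disjoint. -/
/-- The vector `(i|j) = e_i - f_j` of the arrangement `Δ(m,n)` in `ℝ^{m+n}`. -/
def mvec (m n : ℕ) (p : Fin m × Fin n) : (Fin m ⊕ Fin n) → ℝ :=
  Pi.single (Sum.inl p.1) 1 - Pi.single (Sum.inr p.2) 1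

/-- A set `S` of pairs is complete (relative to `Δ(m,n)`):
`span {(i|j) : (i,j) ∈ S} ∩ Δ(m,n) = {(i|j) : (i,j) ∈ S}`. -/
def MagicComplete (m n : ℕ) (S : Set (Fin m × Fin n)) : Prop :=
  (Submodule.span ℝ (mvec m n '' S) : Set ((Fin m ⊕ Fin n) → ℝ)) ∩
      Set.range (mvec m n) = mvec m n '' S

lemma mvec_apply_inl (m n : ℕ) (p : Fin m × Fin n) (a : Fin m) :
    mvec m n p (Sum.inl a) = if a = p.1 then 1 else 0 := by
  simp [mvec, Pi.single_apply, Sum.inl.injEq]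

lemma mvec_apply_inr (m n : ℕ) (p : Fin m × Fin n) (b : Fin n) :
    mvec m n p (Sum.inr b) = if b = p.2 then -1 else 0 := by
  simp [mvec, Pi.single_apply, Sum.inr.injEq]; split <;> simp

lemma mvec_inj (m n : ℕ) : Function.Injective (mvec m n) := by
  intro p q h
  have h1 := congrFun h (Sum.inl p.1)
  have h2 := congrFun h (Sum.inr p.2)
  rw [mvec_apply_inl, mvec_apply_inl, if_pos rfl] at h1
  rw [mvec_apply_inr, mvec_apply_inr, if_pos rfl] at h2
  have hp1 : p.1 = q.1 := by by_contra hc; rw [if_neg hc] at h1; norm_num at h1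
  have hp2 : p.2 = q.2 := by by_contra hc; rw [if_neg hc] at h2; norm_num at h2
  exact Prod.ext hp1 hp2

lemma mvec_rel (m n : ℕ) (i j : Fin m) (h k : Fin n) :
    mvec m n (j, k) = mvec m n (j, h) - mvec m n (i, h) + mvec m n (i, k) := by
  simp only [mvec]; abel

open Finset in
lemma rect_complete (m n : ℕ) (h : ℕ) (A : Fin h → Set (Fin m)) (B : Fin h → Set (Fin n))
    (hAd : ∀ l l', l ≠ l' → Disjoint (A l) (A l'))
    (hBd : ∀ l l', l ≠ l' → Disjoint (B l) (B l')) :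
    MagicComplete m n (⋃ l, A l ×ˢ B l) := by
  classical
  set S : Set (Fin m × Fin n) := ⋃ l, A l ×ˢ B l with hS
  apply Set.Subset.antisymm
  · rintro v ⟨hspan, ⟨⟨a, b⟩, rfl⟩⟩
    have hal : ∃ l, a ∈ A l := by
      by_contra hna
      push_neg at hna
      have hker : Submodule.span ℝ (mvec m n '' S) ≤
          LinearMap.ker (LinearMap.proj (R := ℝ) (φ := fun _ : Fin m ⊕ Fin n => ℝ) (Sum.inl a)) := by
        rw [Submodule.span_le]
        rintro w ⟨⟨i, j⟩, hij, rfl⟩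
        simp only [SetLike.mem_coe, LinearMap.mem_ker, LinearMap.proj_apply]
        rw [mvec_apply_inl]
        obtain ⟨l, hl⟩ := Set.mem_iUnion.mp hij
        have : a ≠ i := fun hcon => hna l (hcon ▸ hl.1)
        simp [this]
      have := hker hspan
      simp only [LinearMap.mem_ker, LinearMap.proj_apply] at this
      rw [mvec_apply_inl] at this
      simp at this
    obtain ⟨l, hal⟩ := hal
    set ψ : ((Fin m ⊕ Fin n) → ℝ) →ₗ[ℝ] ℝ :=
      (∑ i ∈ univ.filter (· ∈ A l), LinearMap.proj (Sum.inl i)) +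
      (∑ j ∈ univ.filter (· ∈ B l), LinearMap.proj (Sum.inr j)) with hψ
    have hψap : ∀ p : Fin m × Fin n, ψ (mvec m n p) =
        (if p.1 ∈ A l then (1:ℝ) else 0) + (if p.2 ∈ B l then (-1:ℝ) else 0) := by
      intro p
      simp only [hψ, LinearMap.add_apply, LinearMap.sum_apply, LinearMap.proj_apply]
      rw [Finset.sum_congr rfl (fun i _ => mvec_apply_inl m n p i),
          Finset.sum_congr rfl (fun j _ => mvec_apply_inr m n p j)]
      rw [Finset.sum_ite_eq' (univ.filter (· ∈ A l)) p.1 (fun _ => (1:ℝ)),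
          Finset.sum_ite_eq' (univ.filter (· ∈ B l)) p.2 (fun _ => (-1:ℝ))]
      simp
    have hker : Submodule.span ℝ (mvec m n '' S) ≤ LinearMap.ker ψ := by
      rw [Submodule.span_le]
      rintro w ⟨⟨i, j⟩, hij, rfl⟩
      simp only [SetLike.mem_coe, LinearMap.mem_ker]
      rw [hψap]
      obtain ⟨l', hl'⟩ := Set.mem_iUnion.mp hij
      by_cases hll : l = l'
      · subst hll; simp [hl'.1, hl'.2]
      · have h1 : i ∉ A l := fun hc => (hAd l l' hll).ne_of_mem hc hl'.1 rfl
        have h2 : j ∉ B l := fun hc => (hBd l l' hll).ne_of_mem hc hl'.2 rfl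
        simp [h1, h2]
    have h0 := hker hspan
    simp only [LinearMap.mem_ker] at h0
    rw [hψap] at h0
    simp only [hal, if_pos] at h0
    have hbl : b ∈ B l := by
      by_contra hc
      rw [if_neg hc] at h0; norm_num at h0
    exact ⟨(a, b), Set.mem_iUnion.mpr ⟨l, hal, hbl⟩, rfl⟩
  · intro v hv
    exact ⟨Submodule.subset_span hv, by
      obtain ⟨p, _, rfl⟩ := hv; exact ⟨p, rfl⟩⟩

open Finset in
lemma tri_to_rect (m n : ℕ) (S : Set (Fin m × Fin n))
    (hTri : ∀ (i j : Fin m) (h k : Fin n), i ≠ j → h ≠ k →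
        (i, h) ∈ S → (j, h) ∈ S → (i, k) ∈ S → (j, k) ∈ S) :
    ∃ (h : ℕ) (A : Fin h → Set (Fin m)) (B : Fin h → Set (Fin n)),
        (∀ l, (A l).Nonempty) ∧ (∀ l, (B l).Nonempty) ∧
        (∀ l l', l ≠ l' → Disjoint (A l) (A l')) ∧
        (∀ l l', l ≠ l' → Disjoint (B l) (B l')) ∧
        S = ⋃ l, A l ×ˢ B l := by
  classical
  set fib : Fin m → Set (Fin n) := fun i => {k | (i, k) ∈ S} with hfib
  have fib_sub : ∀ i i' j, (i, j) ∈ S → (i', j) ∈ S → fib i ⊆ fib i' := by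
    intro i i' j hij hi'j k hk
    by_cases hii : i = i'
    · exact hii ▸ hk
    by_cases hkj : k = j
    · exact hkj ▸ hi'j
    exact hTri i i' j k hii (Ne.symm hkj) hij hi'j hk
  have fib_eq : ∀ i i' j, (i, j) ∈ S → (i', j) ∈ S → fib i = fib i' := fun i i' j h1 h2 =>
    Set.Subset.antisymm (fib_sub i i' j h1 h2) (fib_sub i' i j h2 h1)
  set T : Finset (Fin m) :=
    univ.filter (fun i => (fib i).Nonempty ∧ ∀ i' < i, fib i' ≠ fib i) with hT
  set rep : Fin T.card → Fin m := fun l => (T.orderIsoOfFin rfl l : Fin m) with hrep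
  have rep_mem : ∀ l, rep l ∈ T := fun l => (T.orderIsoOfFin rfl l).2
  have rep_inj : Function.Injective rep := fun l l' h =>
    (T.orderIsoOfFin rfl).injective (Subtype.ext h)
  have rep_eq : ∀ l l', fib (rep l) = fib (rep l') → l = l' := by
    intro l l' hfe
    have h1 := (mem_filter.mp (rep_mem l)).2.2
    have h2 := (mem_filter.mp (rep_mem l')).2.2
    rcases lt_trichotomy (rep l) (rep l') with hlt | heq | hgt
    · exact absurd hfe (h2 _ hlt)
    · exact rep_inj heq
    · exact absurd hfe.symm (h1 _ hgt)
  refine ⟨T.card, fun l => {i | fib i = fib (rep l)}, fun l => fib (rep l),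
    fun l => ⟨rep l, rfl⟩, fun l => (mem_filter.mp (rep_mem l)).2.1, ?_, ?_, ?_⟩
  · intro l l' hll
    rw [Set.disjoint_left]
    intro i hi hi'
    exact hll (rep_eq l l' (hi.symm.trans hi'))
  · intro l l' hll
    rw [Set.disjoint_left]
    intro j hj hj'
    exact hll (rep_eq l l' (fib_eq _ _ j hj hj'))
  · ext ⟨i, j⟩
    simp only [Set.mem_iUnion, Set.mem_prod, Set.mem_setOf_eq]
    constructor
    · intro hij
      set C : Finset (Fin m) := univ.filter (fun i' => fib i' = fib i) with hC
      have hCne : C.Nonempty := ⟨i, by simp [hC]⟩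
      set i0 := C.min' hCne with hi0
      have hfi0 : fib i0 = fib i := (mem_filter.mp (C.min'_mem hCne)).2
      have hi0T : i0 ∈ T := by
        rw [hT, mem_filter]
        refine ⟨mem_univ _, ⟨j, by rw [hfi0]; exact hij⟩, ?_⟩
        intro i' hlt hne
        have : i' ∈ C := by simp [hC, hne.trans hfi0]
        exact absurd (C.min'_le i' this) (not_le.mpr hlt)
      refine ⟨(T.orderIsoOfFin rfl).symm ⟨i0, hi0T⟩, ?_, ?_⟩
      · show fib i = fib (rep _)
        rw [hrep]
        simp only [OrderIso.apply_symm_apply]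
        exact hfi0.symm
      · show j ∈ fib (rep _)
        rw [hrep]
        simp only [OrderIso.apply_symm_apply]
        rw [hfi0]
        exact hij
    · rintro ⟨l, hA, hB⟩
      have : j ∈ fib i := hA ▸ hB
      exact this

/-- for `S ⊆ Δ(m,n)` the following are equivalent: (1) `S` is
complete; (2) whenever a triangle (three vertices of a little square) is
contained in `S` the whole little square is contained in `S`; (3) `S` is a union
of rectangles `A_l × B_l` with the `A_l` pairwise disjoint and the `B_l`
pairwise disjoint. -/
theorem stmt_15 (m n : ℕ) (hm : 0 < m) (hn : 0 < n) (S : Set (Fin m × Fin n)) :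
    (MagicComplete m n S ↔
      ∀ (i j : Fin m) (h k : Fin n), i ≠ j → h ≠ k →
        (i, h) ∈ S → (j, h) ∈ S → (i, k) ∈ S → (j, k) ∈ S) ∧
    ((∀ (i j : Fin m) (h k : Fin n), i ≠ j → h ≠ k →
        (i, h) ∈ S → (j, h) ∈ S → (i, k) ∈ S → (j, k) ∈ S) ↔
      ∃ (h : ℕ) (A : Fin h → Set (Fin m)) (B : Fin h → Set (Fin n)),
        (∀ l, (A l).Nonempty) ∧ (∀ l, (B l).Nonempty) ∧
        (∀ l l', l ≠ l' → Disjoint (A l) (A l')) ∧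
        (∀ l l', l ≠ l' → Disjoint (B l) (B l')) ∧
        S = ⋃ l, A l ×ˢ B l) := by
  -- (3) → (2)
  have h32 : (∃ (h : ℕ) (A : Fin h → Set (Fin m)) (B : Fin h → Set (Fin n)),
        (∀ l, (A l).Nonempty) ∧ (∀ l, (B l).Nonempty) ∧
        (∀ l l', l ≠ l' → Disjoint (A l) (A l')) ∧
        (∀ l l', l ≠ l' → Disjoint (B l) (B l')) ∧
        S = ⋃ l, A l ×ˢ B l) →
      ∀ (i j : Fin m) (h k : Fin n), i ≠ j → h ≠ k →
        (i, h) ∈ S → (j, h) ∈ S → (i, k) ∈ S → (j, k) ∈ S := by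
    rintro ⟨h, A, B, _, _, hAd, hBd, rfl⟩ i j a b _ _ hia hja hib
    obtain ⟨l1, hl1⟩ := Set.mem_iUnion.mp hia
    obtain ⟨l2, hl2⟩ := Set.mem_iUnion.mp hja
    obtain ⟨l3, hl3⟩ := Set.mem_iUnion.mp hib
    have e12 : l1 = l2 := by
      by_contra hc
      exact (hBd l1 l2 hc).ne_of_mem hl1.2 hl2.2 rfl
    have e13 : l1 = l3 := by
      by_contra hc
      exact (hAd l1 l3 hc).ne_of_mem hl1.1 hl3.1 rfl
    exact Set.mem_iUnion.mpr ⟨l1, e12 ▸ hl2.1, e13 ▸ hl3.2⟩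
  -- (1) → (2)
  have h12 : MagicComplete m n S →
      ∀ (i j : Fin m) (h k : Fin n), i ≠ j → h ≠ k →
        (i, h) ∈ S → (j, h) ∈ S → (i, k) ∈ S → (j, k) ∈ S := by
    intro hMC i j a b _ _ hia hja hib
    have hspan : mvec m n (j, b) ∈ Submodule.span ℝ (mvec m n '' S) := by
      rw [mvec_rel m n i j a b]
      exact Submodule.add_mem _
        (Submodule.sub_mem _ (Submodule.subset_span ⟨(j, a), hja, rfl⟩)
          (Submodule.subset_span ⟨(i, a), hia, rfl⟩))
        (Submodule.subset_span ⟨(i, b), hib, rfl⟩)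
    have : mvec m n (j, b) ∈ mvec m n '' S := by
      rw [← hMC]
      exact ⟨hspan, ⟨(j, b), rfl⟩⟩
    obtain ⟨p, hp, hpe⟩ := this
    rwa [← mvec_inj m n hpe]
  -- (2) → (1) via (2) → (3) → (1)
  have h21 : (∀ (i j : Fin m) (h k : Fin n), i ≠ j → h ≠ k →
        (i, h) ∈ S → (j, h) ∈ S → (i, k) ∈ S → (j, k) ∈ S) → MagicComplete m n S := by
    intro hTri
    obtain ⟨h, A, B, _, _, hAd, hBd, hSeq⟩ := tri_to_rect m n S hTri
    rw [hSeq]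
    exact rect_complete m n h A B hAd hBd
  exact ⟨⟨h12, h21⟩, ⟨tri_to_rect m n S, h32⟩⟩
end

section
/- In Δ(m,n): every non-degenerate rectangle A × B is irreducible. Moreover, if S = ⋃_{i=1}^h A_i × B_i is a complete set, where the A_i are pairwise disjoint and the B_i are pairwise disjoint, then the irreducible components of S are the non-degenerate rectangles A_i × B_i together with the single elements of the degenerate rectangles A_i × B_i. -/
open Function Set Submodule

section Decomposition

variable {V : Type*} [AddCommGroup V]

open Classical in
theorem IsDecomposition.sum_ite_smul_eq_zero [Module ℝ V] {S S₁ S₂ : Set V}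
    (hd : IsDecomposition S S₁ S₂) {ι : Type*} (s : Finset ι) (c : ι → ℝ) (v : ι → V)
    (hv : ∀ k ∈ s, v k ∈ S) (hrel : ∑ k ∈ s, c k • v k = 0) :
    ∑ k ∈ s, (if v k ∈ S₁ then c k else 0) • v k = 0 := by
  obtain ⟨-, -, -, hunion, hinf, -⟩ := hd
  set x := ∑ k ∈ s, (if v k ∈ S₁ then c k else 0) • v k
  set y := ∑ k ∈ s, (if v k ∈ S₁ then 0 else c k) • v k
  have hx : x ∈ span ℝ S₁ := sum_mem fun k _ => by
    split_ifs with h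
    · exact smul_mem _ _ (subset_span h)
    · simp
  have hy : y ∈ span ℝ S₂ := sum_mem fun k hk => by
    split_ifs with h
    · simp
    · exact smul_mem _ _ (subset_span (((hunion ▸ hv k hk) : v k ∈ S₁ ∪ S₂).resolve_left h))
  have hxy : x + y = 0 := by
    rw [← Finset.sum_add_distrib, ← hrel]
    refine Finset.sum_congr rfl fun k _ => ?_
    split_ifs <;> simp
  have hx₂ : x ∈ span ℝ S₂ := by
    rw [eq_neg_of_add_eq_zero_left hxy]
    exact neg_mem hy
  have hmem : x ∈ span ℝ S₁ ⊓ span ℝ S₂ := ⟨hx, hx₂⟩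
  rwa [hinf, mem_bot] at hmem

theorem not_isDecomposition_singleton [Module ℝ V] (v : V) (S₁ S₂ : Set V) :
    ¬ IsDecomposition {v} S₁ S₂ := by
  rintro ⟨⟨x, hx⟩, ⟨y, hy⟩, hdisj, hunion, -⟩
  have hxv : x = v := (hunion ▸ Or.inl hx : x ∈ ({v} : Set V))
  have hyv : y = v := (hunion ▸ Or.inr hy : y ∈ ({v} : Set V))
  subst hxv hyv
  exact disjoint_left.1 hdisj hx hy

theorem iSupIndep_span_of_exists_linearMap {R : Type*} [Ring R] [Module R V] {𝒞 : Set (Set V)}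
    (hdisj : 𝒞.PairwiseDisjoint id)
    (h : ∀ T ∈ 𝒞, ∃ π : V →ₗ[R] V, (∀ v ∈ T, π v = v) ∧ ∀ v ∈ ⋃₀ 𝒞 \ T, π v = 0) :
    iSupIndep fun T : 𝒞 => span R (T : Set V) := by
  intro T
  obtain ⟨π, hfix, hkill⟩ := h T T.2
  have hT : span R (T : Set V) ≤ LinearMap.eqLocus π LinearMap.id :=
    span_le.2 hfix
  have hrest : (⨆ (T' : 𝒞) (_ : T' ≠ T), span R (T' : Set V)) ≤ LinearMap.ker π :=
    iSup₂_le fun T' hne => span_le.2 fun v hv => hkill v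
      ⟨⟨T', T'.2, hv⟩, disjoint_left.1 (hdisj T'.2 T.2 (Subtype.coe_ne_coe.2 hne)) hv⟩
  rw [disjoint_def]
  intro x hx hx'
  rw [← show π x = x from hT hx]
  exact hrest hx'

end Decomposition

theorem apply_eq_zero_of_mem_span {κ : Type*} {S : Set (κ → ℝ)} {k : κ}
    (h : ∀ v ∈ S, v k = 0) {x : κ → ℝ} (hx : x ∈ span ℝ S) : x k = 0 :=
  (span_le (p := LinearMap.ker (LinearMap.proj k))).2 h hx

section Rectangles

variable {m n : ℕ}

@[simp] theorem mvec_inl (p : Fin m × Fin n) (i : Fin m) :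
    mvec m n p (Sum.inl i) = if i = p.1 then 1 else 0 := by
  simp [mvec, Pi.single_apply]

@[simp] theorem mvec_inr (p : Fin m × Fin n) (j : Fin n) :
    mvec m n p (Sum.inr j) = if j = p.2 then -1 else 0 := by
  simp only [mvec, Pi.sub_apply, Pi.single_apply, Sum.inr.injEq, reduceCtorEq, if_false]
  split_ifs <;> simp

theorem mvec_injective : Injective (mvec m n) := fun p q h => by
  have h₁ := congrFun h (Sum.inl p.1)
  have h₂ := congrFun h (Sum.inr p.2)
  simp only [mvec_inl, mvec_inr] at h₁ h₂
  exact Prod.ext (by split_ifs at h₁ <;> simp_all) (by split_ifs at h₂ <;> simp_all)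

theorem mvec_cycle (i i' : Fin m) (j j' : Fin n) :
    mvec m n (i, j) - mvec m n (i, j') + mvec m n (i', j') - mvec m n (i', j) = 0 := by
  simp only [mvec]
  abel

theorem mem_prod_of_mvec_mem_span {A : Set (Fin m)} {B : Set (Fin n)} {q : Fin m × Fin n}
    (hq : mvec m n q ∈ span ℝ (mvec m n '' A ×ˢ B)) : q ∈ A ×ˢ B := by
  constructor
  · by_contra hqA
    have := apply_eq_zero_of_mem_span (k := Sum.inl q.1) ?_ hq
    · simp at this
    · rintro _ ⟨p, hp, rfl⟩
      simp only [mvec_inl, ite_eq_right_iff]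
      exact fun h => absurd (h ▸ hp.1) hqA
  · by_contra hqB
    have := apply_eq_zero_of_mem_span (k := Sum.inr q.2) ?_ hq
    · simp at this
    · rintro _ ⟨p, hp, rfl⟩
      simp only [mvec_inr, ite_eq_right_iff]
      exact fun h => absurd (h ▸ hp.2) hqB

theorem isCompleteSet_image_prod (A : Set (Fin m)) (B : Set (Fin n)) :
    IsCompleteSet (range (mvec m n)) (mvec m n '' A ×ˢ B) := by
  refine Subset.antisymm ?_ fun v hv => ⟨image_subset_range _ _ hv, subset_span hv⟩
  rintro _ ⟨⟨q, rfl⟩, hq⟩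
  exact mem_image_of_mem _ (mem_prod_of_mvec_mem_span hq)

theorem IsDecomposition.mvec_mem_iff_of_cycle {A : Set (Fin m)} {B : Set (Fin n)}
    {S₁ S₂ : Set (Fin m ⊕ Fin n → ℝ)} (hd : IsDecomposition (mvec m n '' A ×ˢ B) S₁ S₂)
    {i i' : Fin m} {j j' : Fin n} (hi : i ∈ A) (hi' : i' ∈ A) (hj : j ∈ B) (hj' : j' ∈ B)
    (hii : i ≠ i') (hjj : j ≠ j') :
    (mvec m n (i, j) ∈ S₁ ↔ mvec m n (i, j') ∈ S₁) ∧
      (mvec m n (i, j) ∈ S₁ ↔ mvec m n (i', j) ∈ S₁) := by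
  have hrel := hd.sum_ite_smul_eq_zero Finset.univ ![1, -1, 1, -1]
    ![mvec m n (i, j), mvec m n (i, j'), mvec m n (i', j'), mvec m n (i', j)]
    (by intro k _; fin_cases k <;> exact mem_image_of_mem _ ⟨‹_›, ‹_›⟩)
    (by simpa [Fin.sum_univ_four, sub_eq_add_neg] using mvec_cycle i i' j j')
  have hrow := congrFun hrel (Sum.inl i)
  have hcol := congrFun hrel (Sum.inr j)
  by_cases h₁ : mvec m n (i, j) ∈ S₁ <;> by_cases h₂ : mvec m n (i, j') ∈ S₁ <;>
    by_cases h₃ : mvec m n (i', j) ∈ S₁ <;> by_cases h₄ : mvec m n (i', j') ∈ S₁ <;>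
    simp [Fin.sum_univ_four, h₁, h₂, h₃, h₄, hii, hjj] at hrow hcol ⊢

theorem not_isDecomposition_image_prod {A : Set (Fin m)} {B : Set (Fin n)} (hA : 2 ≤ A.ncard)
    (hB : 2 ≤ B.ncard) (S₁ S₂ : Set (Fin m ⊕ Fin n → ℝ)) :
    ¬ IsDecomposition (mvec m n '' A ×ˢ B) S₁ S₂ := by
  intro hd
  have hsame : ∀ p ∈ A ×ˢ B, ∀ q ∈ A ×ˢ B, mvec m n p ∈ S₁ → mvec m n q ∈ S₁ := by
    rintro ⟨i, j⟩ ⟨hi, hj⟩ ⟨i', j'⟩ ⟨hi', hj'⟩ hp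
    have hrow : mvec m n (i, j) ∈ S₁ ↔ mvec m n (i, j') ∈ S₁ := by
      rcases eq_or_ne j j' with rfl | hjj
      · rfl
      obtain ⟨i'', hi'', hne⟩ := exists_ne_of_one_lt_ncard hA i
      exact (hd.mvec_mem_iff_of_cycle hi hi'' hj hj' hne.symm hjj).1
    have hcol : mvec m n (i, j') ∈ S₁ ↔ mvec m n (i', j') ∈ S₁ := by
      rcases eq_or_ne i i' with rfl | hii
      · rfl
      obtain ⟨j'', hj'', hne⟩ := exists_ne_of_one_lt_ncard hB j'
      exact (hd.mvec_mem_iff_of_cycle hi hi' hj' hj'' hii hne.symm).2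
    exact hcol.1 (hrow.1 hp)
  obtain ⟨⟨x, hx₁⟩, ⟨y, hy₂⟩, hdisj, hunion, -⟩ := hd
  obtain ⟨p, hp, rfl⟩ : x ∈ mvec m n '' A ×ˢ B := hunion ▸ Or.inl hx₁
  obtain ⟨q, hq, rfl⟩ : y ∈ mvec m n '' A ×ˢ B := hunion ▸ Or.inr hy₂
  exact disjoint_left.1 hdisj (hsame p hp q hq hx₁) hy₂

theorem isIrred_image_prod {A : Set (Fin m)} {B : Set (Fin n)} (hA : 2 ≤ A.ncard)
    (hB : 2 ≤ B.ncard) : IsIrred (range (mvec m n)) (mvec m n '' A ×ˢ B) :=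
  ⟨isCompleteSet_image_prod A B,
    ((nonempty_of_ncard_ne_zero (by omega)).prod (nonempty_of_ncard_ne_zero (by omega))).image _,
    not_isDecomposition_image_prod hA hB⟩

theorem isIrred_singleton_mvec (p : Fin m × Fin n) :
    IsIrred (range (mvec m n)) {mvec m n p} := by
  have hp : ({mvec m n p} : Set _) = mvec m n '' {p.1} ×ˢ {p.2} := by
    rw [singleton_prod_singleton, image_singleton]
  exact ⟨hp ▸ isCompleteSet_image_prod _ _, singleton_nonempty _,
    not_isDecomposition_singleton _⟩

end Rectangles

section Components

variable {m n : ℕ}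

theorem exists_linearMap_mvec_of_fst_ne (p : Fin m × Fin n) :
    ∃ π : (Fin m ⊕ Fin n → ℝ) →ₗ[ℝ] (Fin m ⊕ Fin n → ℝ),
      π (mvec m n p) = mvec m n p ∧ ∀ q, q.1 ≠ p.1 → π (mvec m n q) = 0 :=
  ⟨(LinearMap.proj (Sum.inl p.1)).smulRight (mvec m n p), by simp,
    fun q hq => by simp [Ne.symm hq]⟩

theorem exists_linearMap_mvec_of_snd_ne (p : Fin m × Fin n) :
    ∃ π : (Fin m ⊕ Fin n → ℝ) →ₗ[ℝ] (Fin m ⊕ Fin n → ℝ),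
      π (mvec m n p) = mvec m n p ∧ ∀ q, q.2 ≠ p.2 → π (mvec m n q) = 0 :=
  ⟨(-LinearMap.proj (Sum.inr p.2)).smulRight (mvec m n p), by simp,
    fun q hq => by simp [Ne.symm hq]⟩

theorem exists_linearMap_mvec_prod (A : Set (Fin m)) (B : Set (Fin n)) :
    ∃ π : (Fin m ⊕ Fin n → ℝ) →ₗ[ℝ] (Fin m ⊕ Fin n → ℝ),
      (∀ q ∈ A ×ˢ B, π (mvec m n q) = mvec m n q) ∧
        ∀ q, q.1 ∉ A → q.2 ∉ B → π (mvec m n q) = 0 := by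
  classical
  refine ⟨LinearMap.pi fun k => if Sum.elim (· ∈ A) (· ∈ B) k then LinearMap.proj k else 0,
    ?_, ?_⟩
  · rintro q ⟨hq₁, hq₂⟩
    ext (i | j)
    · by_cases hi : i ∈ A <;> simp [hi]
      exact fun h => hi (h ▸ hq₁)
    · by_cases hj : j ∈ B <;> simp [hj]
      exact fun h => hj (h ▸ hq₂)
  · intro q hq₁ hq₂
    ext (i | j)
    · by_cases hi : i ∈ A <;> simp [hi]
      exact fun h => hq₁ (h ▸ hi)
    · by_cases hj : j ∈ B <;> simp [hj]
      exact fun h => hq₂ (h ▸ hj)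

variable {ι : Type*} (A : ι → Set (Fin m)) (B : ι → Set (Fin n))

def rectComponents : Set (Set (Fin m ⊕ Fin n → ℝ)) :=
  {C | ∃ l, 2 ≤ (A l).ncard ∧ 2 ≤ (B l).ncard ∧ C = mvec m n '' (A l ×ˢ B l)} ∪
    {C | ∃ l, ((A l).ncard = 1 ∨ (B l).ncard = 1) ∧ ∃ p ∈ A l ×ˢ B l, C = {mvec m n p}}

theorem sUnion_rectComponents : ⋃₀ rectComponents A B = mvec m n '' ⋃ l, A l ×ˢ B l := by
  refine Subset.antisymm (sUnion_subset ?_) ?_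
  · rintro T (⟨l, -, -, rfl⟩ | ⟨l, -, p, hp, rfl⟩)
    · exact image_mono (subset_iUnion (fun l => A l ×ˢ B l) l)
    · exact singleton_subset_iff.2 (mem_image_of_mem _ (mem_iUnion.2 ⟨l, hp⟩))
  · rintro _ ⟨p, hp, rfl⟩
    obtain ⟨l, hpl⟩ := mem_iUnion.1 hp
    by_cases hnd : 2 ≤ (A l).ncard ∧ 2 ≤ (B l).ncard
    · exact ⟨_, Or.inl ⟨l, hnd.1, hnd.2, rfl⟩, mem_image_of_mem _ hpl⟩
    · have hA := (ncard_pos (s := A l)).2 ⟨_, hpl.1⟩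
      have hB := (ncard_pos (s := B l)).2 ⟨_, hpl.2⟩
      exact ⟨{mvec m n p}, Or.inr ⟨l, by omega, p, hpl, rfl⟩, rfl⟩

theorem rectComponents_finite : (rectComponents A B).Finite :=
  (finite_range (mvec m n)).finite_subsets.subset fun _ hT =>
    (subset_sUnion_of_mem hT).trans
      ((sUnion_rectComponents A B).trans_subset (image_subset_range _ _))

variable {A B}

theorem eq_ite_of_mvec_mem_rectComponents {T} (hT : T ∈ rectComponents A B)
    {q : Fin m × Fin n} (hq : mvec m n q ∈ T) :
    ∃ l, q ∈ A l ×ˢ B l ∧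
      T = if 2 ≤ (A l).ncard ∧ 2 ≤ (B l).ncard then mvec m n '' A l ×ˢ B l else {mvec m n q} := by
  rcases hT with ⟨l, hA₂, hB₂, rfl⟩ | ⟨l, hdeg, p, hp, rfl⟩
  · obtain ⟨q', hq', hqq⟩ := hq
    exact ⟨l, mvec_injective hqq ▸ hq', (if_pos ⟨hA₂, hB₂⟩).symm⟩
  · obtain rfl := mvec_injective hq
    exact ⟨l, hp, (if_neg (by omega)).symm⟩

theorem pairwiseDisjoint_rectComponents (hA : Pairwise (Disjoint on A)) :
    (rectComponents A B).PairwiseDisjoint id := by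
  intro T hT T' hT' hne
  refine disjoint_left.2 ?_
  rintro _ hv hv'
  obtain ⟨q, -, rfl⟩ := (sUnion_rectComponents A B).subset ⟨T, hT, hv⟩
  obtain ⟨l, hl, rfl⟩ := eq_ite_of_mvec_mem_rectComponents hT hv
  obtain ⟨l', hl', rfl⟩ := eq_ite_of_mvec_mem_rectComponents hT' hv'
  obtain rfl : l = l' := hA.eq (not_disjoint_iff.2 ⟨_, hl.1, hl'.1⟩)
  exact hne rfl

theorem iSupIndep_span_rectComponents (hA : Pairwise (Disjoint on A))
    (hB : Pairwise (Disjoint on B)) :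
    iSupIndep fun T : rectComponents A B => span ℝ (T : Set (Fin m ⊕ Fin n → ℝ)) := by
  refine iSupIndep_span_of_exists_linearMap (pairwiseDisjoint_rectComponents hA) fun T hT => ?_
  rw [sUnion_rectComponents]
  rcases hT with ⟨l, -, -, rfl⟩ | ⟨l, hdeg, p, hp, rfl⟩
  · obtain ⟨π, hfix, hkill⟩ := exists_linearMap_mvec_prod (A l) (B l)
    refine ⟨π, fun _ ⟨q, hq, hv⟩ => hv ▸ hfix q hq, ?_⟩
    rintro _ ⟨⟨q, hq, rfl⟩, hqT⟩
    obtain ⟨l', hq'⟩ := mem_iUnion.1 hq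
    have hne : l' ≠ l := by
      rintro rfl
      exact hqT (mem_image_of_mem _ hq')
    exact hkill q (fun h => hne (hA.eq (not_disjoint_iff.2 ⟨_, hq'.1, h⟩)))
      (fun h => hne (hB.eq (not_disjoint_iff.2 ⟨_, hq'.2, h⟩)))
  · rcases hdeg with hA₁ | hB₁
    · obtain ⟨π, hfix, hkill⟩ := exists_linearMap_mvec_of_snd_ne p
      refine ⟨π, fun _ hv => (mem_singleton_iff.1 hv) ▸ hfix, ?_⟩
      rintro _ ⟨⟨q, hq, rfl⟩, hqp⟩
      refine hkill q fun h => hqp ?_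
      obtain ⟨l', hq'⟩ := mem_iUnion.1 hq
      obtain rfl : l' = l := hB.eq (not_disjoint_iff.2 ⟨_, hq'.2, h ▸ hp.2⟩)
      rw [Prod.ext (((ncard_le_one_iff (toFinite _)).1 hA₁.le) hq'.1 hp.1) h]
      rfl
    · obtain ⟨π, hfix, hkill⟩ := exists_linearMap_mvec_of_fst_ne p
      refine ⟨π, fun _ hv => (mem_singleton_iff.1 hv) ▸ hfix, ?_⟩
      rintro _ ⟨⟨q, hq, rfl⟩, hqp⟩
      refine hkill q fun h => hqp ?_
      obtain ⟨l', hq'⟩ := mem_iUnion.1 hq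
      obtain rfl : l' = l := hA.eq (not_disjoint_iff.2 ⟨_, hq'.1, h ▸ hp.1⟩)
      rw [Prod.ext h (((ncard_le_one_iff (toFinite _)).1 hB₁.le) hq'.2 hp.2)]
      rfl

theorem isIrredComponents_rectComponents (hA : Pairwise (Disjoint on A))
    (hB : Pairwise (Disjoint on B)) :
    IsIrredComponents (range (mvec m n)) (mvec m n '' ⋃ l, A l ×ˢ B l) (rectComponents A B) := by
  refine ⟨rectComponents_finite A B, ?_, pairwiseDisjoint_rectComponents hA,
    sUnion_rectComponents A B, iSupIndep_span_rectComponents hA hB, ?_⟩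
  · rintro T (⟨l, hA₂, hB₂, rfl⟩ | ⟨l, -, p, -, rfl⟩)
    · exact isIrred_image_prod hA₂ hB₂
    · exact isIrred_singleton_mvec p
  · rw [← sUnion_rectComponents A B, sUnion_eq_biUnion, span_iUnion₂]

end Components

/-- in `Δ(m,n)` every non-degenerate rectangle `A × B` is
irreducible; and if `S = ⋃ A_l × B_l` is complete with the `A_l` pairwise
disjoint and the `B_l` pairwise disjoint, then the irreducible components of `S`
are the non-degenerate rectangles `A_l × B_l` together with the single elements
of the degenerate rectangles `A_l × B_l`. -/
theorem stmt_16 (m n : ℕ) :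
    (∀ (A : Set (Fin m)) (B : Set (Fin n)), 2 ≤ A.ncard → 2 ≤ B.ncard →
      IsIrred (Set.range (mvec m n)) (mvec m n '' (A ×ˢ B))) ∧
    (∀ (h : ℕ) (A : Fin h → Set (Fin m)) (B : Fin h → Set (Fin n)),
      (∀ l, (A l).Nonempty) → (∀ l, (B l).Nonempty) →
      (∀ l l', l ≠ l' → Disjoint (A l) (A l')) →
      (∀ l l', l ≠ l' → Disjoint (B l) (B l')) →
      IsCompleteSet (Set.range (mvec m n)) (mvec m n '' ⋃ l, A l ×ˢ B l) →
      IsIrredComponents (Set.range (mvec m n)) (mvec m n '' ⋃ l, A l ×ˢ B l)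
        ({C | ∃ l, 2 ≤ (A l).ncard ∧ 2 ≤ (B l).ncard ∧
            C = mvec m n '' (A l ×ˢ B l)} ∪
          {C | ∃ l, ((A l).ncard = 1 ∨ (B l).ncard = 1) ∧
            ∃ p ∈ A l ×ˢ B l, C = {mvec m n p}})) :=
  ⟨fun _ _ => isIrred_image_prod,
    fun _ _ _ _ _ hA hB _ => isIrredComponents_rectComponents hA hB⟩
end
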